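/- arXiv:2405.07227 — 5 statements merged into one kernel-verified Lean document; each statement's English description precedes it below -/
import Mathlib

section
/- Let C > 0, κ ∈ (0,1), m > 0, and let f : [m,∞) → ℝ be differentiable with f(t) > 0 for all t ≥ m, f′(t) ≥ −C t^{−2} f(t)^κ for all t ≥ m, and f(t) → 0 as t → ∞. Then f(m)^{1−κ} ≤ C(1−κ)/m; in particular f(m) ≤ (C(1−κ)/m)^{1/(1−κ)}. -/
open Set Filter

/-- Sublinear Grönwall-type bound: if `f > 0` on `[m,∞)`,
`f'(t) ≥ −C t⁻² f(t)^κ` there, and `f(t) → 0` as `t → ∞`, then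
`f(m)^{1−κ} ≤ C(1−κ)/m`, hence `f(m) ≤ (C(1−κ)/m)^{1/(1−κ)}`. -/
theorem gronwall_sublinear (C κ m : ℝ) (hC : 0 < C) (hκ0 : 0 < κ) (hκ1 : κ < 1)
    (hm : 0 < m) (f f' : ℝ → ℝ)
    (hf : ∀ t ∈ Ici m, HasDerivWithinAt f (f' t) (Ici m) t)
    (hfpos : ∀ t ∈ Ici m, 0 < f t)
    (hf' : ∀ t ∈ Ici m, -C * t ^ (-2 : ℝ) * (f t) ^ κ ≤ f' t)
    (hlim : Tendsto f atTop (nhds 0)) :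
    (f m) ^ (1 - κ) ≤ C * (1 - κ) / m ∧ f m ≤ (C * (1 - κ) / m) ^ (1 / (1 - κ)) := by
  have h1κ : 0 < 1 - κ := by linarith
  set g : ℝ → ℝ := fun t => f t ^ (1 - κ) - C * (1 - κ) * t⁻¹ with hg
  set g' : ℝ → ℝ := fun t => f' t * (1 - κ) * f t ^ (1 - κ - 1) + C * (1 - κ) * (t ^ 2)⁻¹
    with hg'
  have hgd : ∀ t ∈ Ici m, HasDerivWithinAt g (g' t) (Ici m) t := by
    intro t ht
    have htpos : 0 < t := lt_of_lt_of_le hm ht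
    have h1 : HasDerivWithinAt (fun y => f y ^ (1 - κ)) (f' t * (1 - κ) * f t ^ (1 - κ - 1))
        (Ici m) t := (hf t ht).rpow_const (Or.inl (hfpos t ht).ne')
    have h2 : HasDerivWithinAt (fun y : ℝ => C * (1 - κ) * y⁻¹)
        (C * (1 - κ) * (-(t ^ 2)⁻¹)) (Ici m) t :=
      ((hasDerivAt_inv htpos.ne').hasDerivWithinAt).const_mul _
    have := h1.sub h2
    have e : g' t = f' t * (1 - κ) * f t ^ (1 - κ - 1) - C * (1 - κ) * (-(t ^ 2)⁻¹) := by
      simp only [hg']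
      ring
    rw [e]
    exact this
  have hg'nonneg : ∀ t ∈ Ici m, 0 ≤ g' t := by
    intro t ht
    have htpos : 0 < t := lt_of_lt_of_le hm ht
    have hft : 0 < f t := hfpos t ht
    have key : -C * t ^ (-2 : ℝ) * f t ^ κ * ((1 - κ) * f t ^ (1 - κ - 1)) ≤
        f' t * ((1 - κ) * f t ^ (1 - κ - 1)) := by
      apply mul_le_mul_of_nonneg_right (hf' t ht)
      positivity
    have hpow : f t ^ κ * f t ^ (1 - κ - 1) = f t ^ (0 : ℝ) := by
      rw [← Real.rpow_add hft]; norm_num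
    have ht2 : t ^ (-2 : ℝ) = (t ^ 2)⁻¹ := by
      rw [Real.rpow_neg htpos.le, Real.rpow_two]
    have : -C * t ^ (-2 : ℝ) * f t ^ κ * ((1 - κ) * f t ^ (1 - κ - 1)) =
        -(C * (1 - κ) * (t ^ 2)⁻¹) := by
      rw [← ht2]
      calc -C * t ^ (-2 : ℝ) * f t ^ κ * ((1 - κ) * f t ^ (1 - κ - 1))
          = -(C * (1 - κ) * t ^ (-2 : ℝ)) * (f t ^ κ * f t ^ (1 - κ - 1)) := by ring
        _ = -(C * (1 - κ) * t ^ (-2 : ℝ)) := by rw [hpow, Real.rpow_zero, mul_one]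
    rw [this] at key
    have : -(C * (1 - κ) * (t ^ 2)⁻¹) ≤ f' t * (1 - κ) * f t ^ (1 - κ - 1) := by
      calc -(C * (1 - κ) * (t ^ 2)⁻¹) ≤ f' t * ((1 - κ) * f t ^ (1 - κ - 1)) := key
        _ = f' t * (1 - κ) * f t ^ (1 - κ - 1) := by ring
    simp only [hg']
    linarith
  have hmono : MonotoneOn g (Ici m) := by
    apply monotoneOn_of_hasDerivWithinAt_nonneg (convex_Ici m)
      (fun t ht => (hgd t ht).continuousWithinAt)
      (fun t ht => (hgd t (interior_subset ht)).mono interior_subset)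
      (fun t ht => hg'nonneg t (interior_subset ht))
  have hglim : Tendsto g atTop (nhds 0) := by
    have h1 : Tendsto (fun t => f t ^ (1 - κ)) atTop (nhds 0) := by
      have : ContinuousAt (fun x : ℝ => x ^ (1 - κ)) 0 :=
        Real.continuousAt_rpow_const 0 (1 - κ) (Or.inr h1κ.le)
      have := this.tendsto.comp hlim
      simpa [Function.comp_def, Real.zero_rpow h1κ.ne'] using this
    have h2 : Tendsto (fun t : ℝ => C * (1 - κ) * t⁻¹) atTop (nhds 0) := by
      simpa using tendsto_inv_atTop_zero.const_mul (C * (1 - κ))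
    simpa using h1.sub h2
  have hgm : g m ≤ 0 := by
    apply ge_of_tendsto hglim
    filter_upwards [eventually_ge_atTop m] with t ht
    exact hmono self_mem_Ici ht ht
  have h1 : f m ^ (1 - κ) ≤ C * (1 - κ) / m := by
    have := sub_nonpos.mp hgm
    rwa [div_eq_mul_inv]
  refine ⟨h1, ?_⟩
  have hfm : 0 < f m := hfpos m self_mem_Ici
  calc f m = (f m ^ (1 - κ)) ^ (1 / (1 - κ)) := by
        rw [← Real.rpow_mul hfm.le, mul_one_div, div_self h1κ.ne', Real.rpow_one]
    _ ≤ (C * (1 - κ) / m) ^ (1 / (1 - κ)) :=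
        Real.rpow_le_rpow (Real.rpow_nonneg hfm.le _) h1 (by positivity)
end

section
/- For every dimension d ≥ 1 there is a constant c_d > 0, depending only on d, with the following property. Let T : ℝ^d → ℝ^d satisfy the monotonicity condition ⟨T(x) − T(y), x − y⟩ ≥ 0 for all x, y ∈ ℝ^d (equivalently, two-point cyclical monotonicity for the quadratic cost). Then for every x ∈ ℝ^d with T(x) ≠ x there exists a measurable set Ω ⊆ ℝ^d with x ∈ Ω, such that the Lebesgue measure of Ω is at least c_d ‖T(x) − x‖^d, and ‖T(y) − y‖ ≥ ‖T(x) − x‖/2 for all y ∈ Ω. -/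
open MeasureTheory Metric
open scoped RealInnerProductSpace ENNReal

set_option maxHeartbeats 1000000

/-- For a monotone map `T` (two-point cyclical monotonicity for the quadratic cost),
around any point `x` with `T(x) ≠ x` there is a set `Ω ∋ x` of Lebesgue measure at
least `c_d ‖T(x) − x‖^d` on which the displacement is at least `‖T(x) − x‖/2`. -/
theorem exists_set_of_large_displacement (d : ℕ) (hd : 1 ≤ d) :
    ∃ c : ℝ, 0 < c ∧
      ∀ T : EuclideanSpace ℝ (Fin d) → EuclideanSpace ℝ (Fin d),
        (∀ x y, 0 ≤ ⟪T x - T y, x - y⟫) →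
        ∀ x, T x ≠ x →
          ∃ Ω : Set (EuclideanSpace ℝ (Fin d)), MeasurableSet Ω ∧ x ∈ Ω ∧
            ENNReal.ofReal (c * ‖T x - x‖ ^ d) ≤ volume Ω ∧
            ∀ y ∈ Ω, ‖T x - x‖ / 2 ≤ ‖T y - y‖ := by
  haveI : Nontrivial (EuclideanSpace ℝ (Fin d)) :=
    Module.nontrivial_of_finrank_pos (R := ℝ) (by rw [finrank_euclideanSpace_fin]; omega)
  have hdim : Module.finrank ℝ (EuclideanSpace ℝ (Fin d)) = d :=
    finrank_euclideanSpace_fin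
  set B : ℝ≥0∞ := volume (ball (0 : EuclideanSpace ℝ (Fin d)) 1) with hB
  have hBpos : 0 < B := measure_ball_pos _ _ one_pos
  have hBlt : B < ⊤ := measure_ball_lt_top
  have hBt : 0 < B.toReal := ENNReal.toReal_pos hBpos.ne' hBlt.ne
  refine ⟨(3 / 128) ^ d * B.toReal, by positivity, ?_⟩
  intro T hT x hx
  set v : EuclideanSpace ℝ (Fin d) := T x - x with hv
  set r : ℝ := ‖v‖ with hr
  have hrpos : 0 < r := by
    simp only [hr, hv, norm_pos_iff]
    exact sub_ne_zero.mpr hx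
  set Ω : Set (EuclideanSpace ℝ (Fin d)) :=
    {y | ‖y - x‖ ^ 2 + (r / 2) * ‖y - x‖ ≤ ⟪v, y - x⟫} with hΩ
  have hcont1 : Continuous fun y : EuclideanSpace ℝ (Fin d) =>
      ‖y - x‖ ^ 2 + (r / 2) * ‖y - x‖ := by continuity
  have hcont2 : Continuous fun y : EuclideanSpace ℝ (Fin d) => ⟪v, y - x⟫ := by
    exact Continuous.inner continuous_const (by continuity)
  refine ⟨Ω, measurableSet_le hcont1.measurable hcont2.measurable, ?_, ?_, ?_⟩
  · simp [hΩ]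
  · -- measure lower bound: Ω contains a ball of radius 3r/128
    set e : EuclideanSpace ℝ (Fin d) := r⁻¹ • v with he
    have hev : ⟪e, v⟫ = r := by
      rw [he, real_inner_smul_left, real_inner_self_eq_norm_sq, ← hr]
      field_simp
    have hne : ‖e‖ = 1 := by
      rw [he, norm_smul, norm_inv, Real.norm_eq_abs, abs_of_pos hrpos, ← hr]
      field_simp
    have hsub : ball (x + (13 * r / 128) • e) (3 * r / 128) ⊆ Ω := by
      intro y hy
      rw [mem_ball, dist_eq_norm] at hy
      set z := y - x with hz
      have hy' : ‖z - (13 * r / 128) • e‖ < 3 * r / 128 := by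
        have : y - (x + (13 * r / 128) • e) = z - (13 * r / 128) • e := by
          rw [hz]; abel
        rwa [this] at hy
      have hznorm : ‖z‖ ≤ r / 8 := by
        have := norm_sub_norm_le z ((13 * r / 128) • e)
        have h2 : ‖(13 * r / 128) • e‖ = 13 * r / 128 := by
          rw [norm_smul, hne, Real.norm_eq_abs, abs_of_pos (by positivity)]; ring
        nlinarith [norm_nonneg (z - (13 * r / 128) • e)]
      have hinner : 5 * r ^ 2 / 64 ≤ ⟪v, z⟫ := by
        have h1 : ⟪e, z⟫ = 13 * r / 128 + ⟪e, z - (13 * r / 128) • e⟫ := by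
          simp only [inner_sub_right, real_inner_smul_right,
            real_inner_self_eq_norm_sq, hne]
          ring
        have h2 : |⟪e, z - (13 * r / 128) • e⟫| ≤ 3 * r / 128 := by
          calc |⟪e, z - (13 * r / 128) • e⟫| ≤ ‖e‖ * ‖z - (13 * r / 128) • e‖ :=
                abs_real_inner_le_norm _ _
            _ ≤ 3 * r / 128 := by rw [hne, one_mul]; exact hy'.le
        have h3 : 10 * r / 128 ≤ ⟪e, z⟫ := by
          rw [h1]
          have := abs_le.mp h2
          linarith [this.1]
        have h4 : ⟪v, z⟫ = r * ⟪e, z⟫ := by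
          have : v = r • e := by
            rw [he, smul_smul]
            field_simp
            rw [one_smul]
          rw [this, real_inner_smul_left]
        rw [h4]
        nlinarith
      show ‖z‖ ^ 2 + (r / 2) * ‖z‖ ≤ ⟪v, z⟫
      nlinarith [norm_nonneg z]
    have hrw : (3 / 128 : ℝ) ^ d * B.toReal * ‖T x - x‖ ^ d
        = (3 * r / 128) ^ d * B.toReal := by
      rw [← hv, ← hr]
      rw [show (3 * r / 128 : ℝ) = (3 / 128) * r by ring, mul_pow]
      ring
    calc ENNReal.ofReal ((3 / 128) ^ d * B.toReal * ‖T x - x‖ ^ d)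
        = ENNReal.ofReal ((3 * r / 128) ^ d) * B := by
          rw [hrw, ENNReal.ofReal_mul (by positivity), ENNReal.ofReal_toReal hBlt.ne]
      _ = volume (ball (x + (13 * r / 128) • e) (3 * r / 128)) := by
          rw [Measure.addHaar_ball _ _ (by positivity), hdim, ← hB]
      _ ≤ volume Ω := measure_mono hsub
  · -- displacement bound
    intro y hy
    rcases eq_or_ne y x with rfl | hyx
    · have : T y - y = v := hv ▸ rfl
      rw [this, ← hr]; linarith
    · have hyx' : 0 < ‖y - x‖ := by
        rw [norm_pos_iff]; exact sub_ne_zero.mpr hyx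
      have hmem : ‖y - x‖ ^ 2 + (r / 2) * ‖y - x‖ ≤ ⟪v, y - x⟫ := hy
      set u : EuclideanSpace ℝ (Fin d) := T y - y with hu
      have hmono := hT x y
      have hexp : ⟪T x - T y, x - y⟫ = ‖x - y‖ ^ 2 + ⟪v - u, x - y⟫ := by
        have h0 : T x - T y = (x - y) + (v - u) := by
          rw [hv, hu]; abel
        rw [h0, inner_add_left, real_inner_self_eq_norm_sq]
      have key : ⟪v, y - x⟫ ≤ ‖x - y‖ ^ 2 + ⟪u, y - x⟫ := by
        rw [hexp] at hmono
        have : ⟪v - u, x - y⟫ = -⟪v, y - x⟫ + ⟪u, y - x⟫ := by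
          rw [inner_sub_left]
          have h1 : ⟪v, x - y⟫ = -⟪v, y - x⟫ := by
            rw [show x - y = -(y - x) by abel, inner_neg_right]
          have h2 : ⟪u, x - y⟫ = -⟪u, y - x⟫ := by
            rw [show x - y = -(y - x) by abel, inner_neg_right]
          rw [h1, h2]; ring
        rw [this] at hmono
        linarith
      have hcs : ⟪u, y - x⟫ ≤ ‖u‖ * ‖y - x‖ := real_inner_le_norm _ _
      have hnn : ‖x - y‖ = ‖y - x‖ := norm_sub_rev _ _
      rw [hnn] at key
      have : (r / 2) * ‖y - x‖ ≤ ‖u‖ * ‖y - x‖ := by nlinarith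
      have := le_of_mul_le_mul_right (by linarith : (r / 2) * ‖y - x‖ ≤ ‖u‖ * ‖y - x‖) hyx'
      exact this
end

section
/- Let d ≥ 1, let ω_d denote the Lebesgue volume of the unit ball of ℝ^d, and let J_d := d ∫₀¹ log(1−s²) s^{d−1} ds (a finite negative number). Let A > ω_d^{2/d} · e^{−J_d}, and suppose C : (1,∞) → (0,∞) satisfies, for every m > 1, the normalization identity ω_d · (((m−1)/m) C_m)^{1/(m−1)} · (C_m/A)^{d/2} · d ∫₀¹ (1−s²)^{1/(m−1)} s^{d−1} ds = 1. Then there exists M > 1 such that C_m ≤ A · ω_d^{−2/d} for all m ≥ M. -/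
open MeasureTheory

open Real Set intervalIntegral Filter Topology


lemma neg_log_le (u : ℝ) (hu : 0 < u) : -Real.log u ≤ 2 * u ^ (-(1/2) : ℝ) := by
  have h1 : Real.log (u ^ (-(1/2) : ℝ)) ≤ u ^ (-(1/2) : ℝ) - 1 :=
    Real.log_le_sub_one_of_pos (Real.rpow_pos_of_pos hu _)
  rw [Real.log_rpow hu] at h1
  nlinarith [Real.rpow_nonneg hu.le (-(1/2) : ℝ)]

lemma intLog (r : ℝ) (hr : 0 ≤ r) :
    IntervalIntegrable (fun s => Real.log (1 - s ^ 2) * s ^ r) volume 0 1 := by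
  rw [intervalIntegrable_iff, uIoc_of_le zero_le_one,
    integrableOn_Ioc_iff_integrableOn_Ioo]
  have hg : IntegrableOn (fun s : ℝ => 2 * (1 - s) ^ (-(1/2) : ℝ)) (Ioo (0:ℝ) 1) := by
    have h1 : IntervalIntegrable (fun x : ℝ => x ^ (-(1/2) : ℝ)) volume 0 1 :=
      intervalIntegrable_rpow' (by norm_num)
    have h2 := (h1.comp_sub_left 1).symm
    simp only [sub_zero, sub_self] at h2
    have h3 := h2.const_mul 2
    rwa [intervalIntegrable_iff, uIoc_of_le zero_le_one,
      integrableOn_Ioc_iff_integrableOn_Ioo] at h3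
  have hmeas : AEStronglyMeasurable (fun s => Real.log (1 - s ^ 2) * s ^ r)
      (volume.restrict (Ioo (0:ℝ) 1)) := by
    have hcont : ContinuousOn (fun s => Real.log (1 - s ^ 2) * s ^ r) (Ioo (0:ℝ) 1) := by
      refine ContinuousOn.mul (ContinuousOn.log ?_ ?_) ?_
      · exact (continuous_const.sub (continuous_pow 2)).continuousOn
      · intro x hx; nlinarith [hx.1, hx.2]
      · exact continuousOn_id.rpow_const fun x hx => Or.inl (ne_of_gt hx.1)
    exact hcont.aestronglyMeasurable measurableSet_Ioo
  refine Integrable.mono' hg hmeas ?_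
  filter_upwards [ae_restrict_mem measurableSet_Ioo] with s hs
  have hs0 : 0 < s := hs.1
  have hs1 : s < 1 := hs.2
  have ht : 0 < 1 - s ^ 2 := by nlinarith
  have ht1 : 1 - s ^ 2 ≤ 1 := by nlinarith
  have hlog : Real.log (1 - s ^ 2) ≤ 0 := Real.log_nonpos ht.le ht1
  have hsr : (0:ℝ) ≤ s ^ r := Real.rpow_nonneg hs0.le r
  have hsr1 : s ^ r ≤ 1 := Real.rpow_le_one hs0.le hs1.le hr
  have hfac : (1 : ℝ) - s ^ 2 = (1 - s) * (1 + s) := by ring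
  have hlogsplit : Real.log (1 - s ^ 2) = Real.log (1 - s) + Real.log (1 + s) := by
    rw [hfac, Real.log_mul (by linarith) (by linarith)]
  have h1s : (0:ℝ) ≤ Real.log (1 + s) := Real.log_nonneg (by linarith)
  have hb := neg_log_le (1 - s) (by linarith)
  calc ‖Real.log (1 - s ^ 2) * s ^ r‖ = -Real.log (1 - s ^ 2) * s ^ r := by
        rw [norm_mul, Real.norm_of_nonpos hlog, Real.norm_of_nonneg hsr]
    _ ≤ -Real.log (1 - s ^ 2) * 1 := by
        apply mul_le_mul_of_nonneg_left hsr1 (by linarith)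
    _ = -Real.log (1 - s) - Real.log (1 + s) := by rw [hlogsplit]; ring
    _ ≤ 2 * (1 - s) ^ (-(1/2) : ℝ) := by linarith
lemma integral_lower_bound (r ε : ℝ) (hr : 0 ≤ r) (hε : 0 < ε) :
    (∫ s in (0:ℝ)..1, s ^ r) + ε * ∫ s in (0:ℝ)..1, Real.log (1 - s ^ 2) * s ^ r
      ≤ ∫ s in (0:ℝ)..1, (1 - s ^ 2) ^ ε * s ^ r := by
  have int_log := intLog r hr
  have int_pow : IntervalIntegrable (fun s : ℝ => s ^ r) volume 0 1 :=
    intervalIntegrable_rpow' (by linarith)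
  have int_lhs : IntervalIntegrable
      (fun s => s ^ r + ε * (Real.log (1 - s ^ 2) * s ^ r)) volume 0 1 :=
    int_pow.add (int_log.const_mul ε)
  have int_rhs : IntervalIntegrable (fun s => (1 - s ^ 2) ^ ε * s ^ r) volume 0 1 := by
    apply ContinuousOn.intervalIntegrable
    refine ContinuousOn.mul ?_ ?_
    · exact (continuous_const.sub (continuous_pow 2)).continuousOn.rpow_const
        fun x _ => Or.inr hε.le
    · exact continuousOn_id.rpow_const fun x _ => Or.inr hr
  have hne1 : ∀ᵐ s ∂(volume.restrict (Icc (0:ℝ) 1)), s ≠ 1 := by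
    rw [ae_iff]
    have h1 : {a : ℝ | ¬ a ≠ 1} = {1} := by ext a; simp
    rw [h1, Measure.restrict_apply (measurableSet_singleton 1)]
    exact le_antisymm (le_trans (measure_mono Set.inter_subset_left) (by simp)) (by positivity)
  have hae : (fun s => s ^ r + ε * (Real.log (1 - s ^ 2) * s ^ r))
      ≤ᵐ[volume.restrict (Icc (0:ℝ) 1)] (fun s => (1 - s ^ 2) ^ ε * s ^ r) := by
    filter_upwards [ae_restrict_mem measurableSet_Icc, hne1] with s hsIcc hs1
    have hs0 : (0:ℝ) ≤ s := hsIcc.1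
    have hslt : s < 1 := lt_of_le_of_ne hsIcc.2 hs1
    have ht : 0 < 1 - s ^ 2 := by nlinarith
    have key : 1 + ε * Real.log (1 - s ^ 2) ≤ (1 - s ^ 2) ^ ε := by
      rw [Real.rpow_def_of_pos ht]
      have h2 := Real.add_one_le_exp (ε * Real.log (1 - s ^ 2))
      rw [mul_comm] at h2 ⊢
      linarith
    calc s ^ r + ε * (Real.log (1 - s ^ 2) * s ^ r)
        = (1 + ε * Real.log (1 - s ^ 2)) * s ^ r := by ring
      _ ≤ (1 - s ^ 2) ^ ε * s ^ r :=
          mul_le_mul_of_nonneg_right key (Real.rpow_nonneg hs0 r)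
  have hmono := intervalIntegral.integral_mono_ae_restrict zero_le_one int_lhs int_rhs hae
  rwa [intervalIntegral.integral_add int_pow (int_log.const_mul ε),
    intervalIntegral.integral_const_mul] at hmono

/-- For the quadratic potential `V(x) = A|x|²` with `A > ω_d^{2/d} e^{−J_d}`, where
`J_d = d ∫₀¹ log(1−s²) s^{d−1} ds`, the normalization constants `C_m` eventually
satisfy `C_m ≤ A ω_d^{−2/d}`, i.e. `spt(ρ̄_m) ⊆ spt(ρ̄_∞)` for large `m`. -/
theorem support_inclusion_quadratic_potential (d : ℕ) (hd : 1 ≤ d)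
    (ωd : ℝ)
    (hω : ωd = (volume (Metric.ball (0 : EuclideanSpace ℝ (Fin d)) 1)).toReal)
    (J : ℝ)
    (hJ : J = d * ∫ s in (0 : ℝ)..1, Real.log (1 - s ^ 2) * s ^ ((d : ℝ) - 1))
    (A : ℝ) (hA : ωd ^ (2 / (d : ℝ)) * Real.exp (-J) < A)
    (C : ℝ → ℝ) (hCpos : ∀ m > (1 : ℝ), 0 < C m)
    (hnorm : ∀ m > (1 : ℝ),
      ωd * (((m - 1) / m) * C m) ^ (1 / (m - 1)) * (C m / A) ^ ((d : ℝ) / 2) *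
        ((d : ℝ) * ∫ s in (0 : ℝ)..1, (1 - s ^ 2) ^ (1 / (m - 1)) * s ^ ((d : ℝ) - 1))
        = 1) :
    ∃ M > (1 : ℝ), ∀ m ≥ M, C m ≤ A * ωd ^ (-(2 / (d : ℝ))) := by
  have hd0 : (0:ℝ) < d := by exact_mod_cast Nat.pos_of_ne_zero (by omega)
  have hr : (0:ℝ) ≤ (d:ℝ) - 1 := by
    have : (1:ℝ) ≤ (d:ℝ) := by exact_mod_cast hd
    linarith
  have hωpos : 0 < ωd := by
    rw [hω]
    exact ENNReal.toReal_pos (Metric.measure_ball_pos _ _ one_pos).ne' measure_ball_lt_top.ne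
  have hA0 : 0 < A := lt_trans (by positivity) hA
  -- the limit
  have hlt : Real.exp (-J) < A * ωd ^ (-(2 / (d:ℝ))) := by
    have hp : 0 < ωd ^ (2 / (d:ℝ)) := Real.rpow_pos_of_pos hωpos _
    rw [Real.rpow_neg hωpos.le]
    rw [← div_eq_mul_inv, lt_div_iff₀ hp]
    linarith [mul_comm (Real.exp (-J)) (ωd ^ (2 / (d:ℝ)))]
  have hsub : Tendsto (fun m : ℝ => m - 1) atTop atTop :=
    tendsto_atTop_add_const_right atTop (-1) tendsto_id
  have hpow : Tendsto (fun m : ℝ => (1 + J / (m - 1)) ^ (m - 1)) atTop (𝓝 (Real.exp J)) :=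
    (tendsto_one_add_div_rpow_exp J).comp hsub
  have hinv : Tendsto (fun m : ℝ => ((1 + J / (m - 1)) ^ (m - 1))⁻¹) atTop
      (𝓝 (Real.exp J)⁻¹) := hpow.inv₀ (Real.exp_ne_zero J)
  have hfrac : Tendsto (fun m : ℝ => m / (m - 1)) atTop (𝓝 1) := by
    have h0 : Tendsto (fun m : ℝ => 1 + (m - 1)⁻¹) atTop (𝓝 (1 + 0)) :=
      (hsub.inv_tendsto_atTop).const_add 1
    rw [add_zero] at h0
    refine h0.congr' ?_
    filter_upwards [eventually_gt_atTop (1:ℝ)] with m hm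
    have : m - 1 ≠ 0 := by linarith
    field_simp; ring
  have hf : Tendsto (fun m : ℝ => m / (m - 1) * ((1 + J / (m - 1)) ^ (m - 1))⁻¹) atTop
      (𝓝 (Real.exp (-J))) := by
    have := hfrac.mul hinv
    rwa [one_mul, ← Real.exp_neg] at this
  have htend1 : Tendsto (fun m : ℝ => 1 + J / (m - 1)) atTop (𝓝 1) := by
    have h0 : Tendsto (fun m : ℝ => 1 + J * (m - 1)⁻¹) atTop (𝓝 (1 + J * 0)) :=
      ((hsub.inv_tendsto_atTop).const_mul J).const_add 1
    simpa [div_eq_mul_inv] using h0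
  have e1 := eventually_gt_atTop (1:ℝ)
  have e2 : ∀ᶠ m : ℝ in atTop, 0 < 1 + J / (m - 1) :=
    htend1.eventually (eventually_gt_nhds one_pos)
  have e3 : ∀ᶠ m : ℝ in atTop,
      m / (m - 1) * ((1 + J / (m - 1)) ^ (m - 1))⁻¹ < A * ωd ^ (-(2 / (d:ℝ))) :=
    hf.eventually (eventually_lt_nhds hlt)
  obtain ⟨M₀, hM₀⟩ := eventually_atTop.mp ((e1.and e2).and e3)
  refine ⟨max 2 M₀, lt_of_lt_of_le one_lt_two (le_max_left _ _), fun m hm => ?_⟩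
  obtain ⟨⟨hm1, hpos1⟩, hflt⟩ := hM₀ m (le_trans (le_max_right _ _) hm)
  by_contra hcon
  push_neg at hcon
  -- main argument
  have hm1' : (0:ℝ) < m - 1 := by linarith
  have hm0 : (0:ℝ) < m := by linarith
  have hε : 0 < 1 / (m - 1) := by positivity
  have hCm := hCpos m hm1
  have hB : 0 < (m - 1) / m * C m := mul_pos (div_pos hm1' hm0) hCm
  have hEq := hnorm m hm1
  have hCA : ωd ^ (-(2 / (d:ℝ))) < C m / A := by
    rw [lt_div_iff₀ hA0]
    linarith [mul_comm A (ωd ^ (-(2 / (d:ℝ))))]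
  have hX : ωd⁻¹ < (C m / A) ^ ((d:ℝ) / 2) := by
    have h1 : (ωd ^ (-(2 / (d:ℝ)))) ^ ((d:ℝ) / 2) < (C m / A) ^ ((d:ℝ) / 2) :=
      Real.rpow_lt_rpow (Real.rpow_pos_of_pos hωpos _).le hCA (by positivity)
    have h2 : (ωd ^ (-(2 / (d:ℝ)))) ^ ((d:ℝ) / 2) = ωd⁻¹ := by
      rw [← Real.rpow_mul hωpos.le]
      have he : -(2 / (d:ℝ)) * ((d:ℝ) / 2) = -1 := by field_simp
      rw [he, Real.rpow_neg_one]
    rwa [h2] at h1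
  set L := ∫ s in (0:ℝ)..1, Real.log (1 - s ^ 2) * s ^ ((d:ℝ) - 1) with hL
  set P := ((m - 1) / m * C m) ^ (1 / (m - 1)) with hP
  set D := (d:ℝ) * ∫ s in (0:ℝ)..1, (1 - s ^ 2) ^ (1 / (m - 1)) * s ^ ((d:ℝ) - 1) with hD
  have hPpos : 0 < P := Real.rpow_pos_of_pos hB _
  have hωX : 1 < ωd * (C m / A) ^ ((d:ℝ) / 2) := by
    have h3 := mul_lt_mul_of_pos_left hX hωpos
    rwa [mul_inv_cancel₀ hωpos.ne'] at h3
  have h5 : P * D * (ωd * (C m / A) ^ ((d:ℝ) / 2)) = 1 := by rw [← hEq]; ring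
  have hPD : 0 < P * D := by nlinarith
  have hPD1 : P * D < 1 := by nlinarith
  have hDQ : 1 + J / (m - 1) ≤ D := by
    have hlb := integral_lower_bound ((d:ℝ) - 1) (1 / (m - 1)) hr hε
    have hpw : (∫ s in (0:ℝ)..1, s ^ ((d:ℝ) - 1)) = 1 / (d:ℝ) := by
      rw [integral_rpow (Or.inl (by linarith))]
      rw [show (d:ℝ) - 1 + 1 = (d:ℝ) by ring, Real.one_rpow, Real.zero_rpow hd0.ne']
      ring
    rw [hpw, ← hL] at hlb
    have h6 : (d:ℝ) * (1 / (d:ℝ) + 1 / (m - 1) * L) ≤ D := by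
      rw [hD]; exact mul_le_mul_of_nonneg_left hlb hd0.le
    have h7 : (d:ℝ) * (1 / (d:ℝ) + 1 / (m - 1) * L) = 1 + J / (m - 1) := by
      rw [hJ]; field_simp
    linarith
  have hPlt : P * (1 + J / (m - 1)) < 1 :=
    lt_of_le_of_lt (mul_le_mul_of_nonneg_left hDQ hPpos.le) hPD1
  have hPlt2 : P < 1 / (1 + J / (m - 1)) := (lt_div_iff₀ hpos1).mpr hPlt
  have hraise := Real.rpow_lt_rpow hPpos.le hPlt2 hm1'
  rw [hP, ← Real.rpow_mul hB.le, one_div_mul_cancel hm1'.ne', Real.rpow_one,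
    one_div, Real.inv_rpow hpos1.le] at hraise
  have hfin : C m < m / (m - 1) * ((1 + J / (m - 1)) ^ (m - 1))⁻¹ := by
    have hCeq : C m = m / (m - 1) * ((m - 1) / m * C m) := by field_simp
    rw [hCeq]
    exact mul_lt_mul_of_pos_left hraise (by positivity)
  linarith
end

section
/- There exists a constant K > 0 such that for every m ≥ 2, ∫_{ℝ^d} ρ̄_m(x) |log ρ̄_m(x)| dx ≤ K/(m−1). -/
set_option maxHeartbeats 1000000

open MeasureTheory

/-- The stationary state at level `m`:
`ρ̄_m(x) = (((m−1)/m) (C_m − V(x))₊)^{1/(m−1)}`. -/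
noncomputable def rhoBar {d : ℕ} (V : EuclideanSpace ℝ (Fin d) → ℝ) (C : ℝ → ℝ)
    (m : ℝ) (x : EuclideanSpace ℝ (Fin d)) : ℝ :=
  (((m - 1) / m) * max (C m - V x) 0) ^ (1 / (m - 1))

section Taylor
variable {E : Type*} [NormedAddCommGroup E] [NormedSpace ℝ E]

/-- derivative data along a line -/
lemma line_hasDerivAt (V : E → ℝ) (hV : ContDiff ℝ 2 V) (x v : E) :
    (∀ t : ℝ, HasDerivAt (fun s : ℝ => V (x + s • v)) (fderiv ℝ V (x + t • v) v) t) ∧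
    (∀ t : ℝ, HasDerivAt (fun s : ℝ => fderiv ℝ V (x + s • v) v)
      (iteratedFDeriv ℝ 2 V (x + t • v) ![v, v]) t) := by
  have hVd : Differentiable ℝ V := hV.differentiable (by norm_num)
  have hW : Differentiable ℝ (fderiv ℝ V) :=
    (hV.fderiv_right (le_refl 2)).differentiable (n := 1) one_ne_zero
  have hline : ∀ t : ℝ, HasDerivAt (fun s : ℝ => x + s • v) v t := by
    intro t
    simpa using ((hasDerivAt_id t).smul_const v).const_add x
  constructor
  · intro t
    exact ((hVd _).hasFDerivAt).comp_hasDerivAt t (hline t)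
  · intro t
    have h1 : HasDerivAt (fun s : ℝ => fderiv ℝ V (x + s • v))
        (fderiv ℝ (fderiv ℝ V) (x + t • v) v) t :=
      ((hW _).hasFDerivAt).comp_hasDerivAt t (hline t)
    have h2 := ((ContinuousLinearMap.apply ℝ ℝ v).hasFDerivAt).comp_hasDerivAt t h1
    have : HasDerivAt (fun s : ℝ => fderiv ℝ V (x + s • v) v)
        ((fderiv ℝ (fderiv ℝ V) (x + t • v) v) v) t := h2
    rwa [iteratedFDeriv_two_apply]

/-- two-sided Taylor bound -/
lemma taylor_two_sided (V : E → ℝ) (hV : ContDiff ℝ 2 V) (α A : ℝ)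
    (hH : ∀ x ξ : E, α * ‖ξ‖ ^ 2 ≤ iteratedFDeriv ℝ 2 V x ![ξ, ξ] ∧
      iteratedFDeriv ℝ 2 V x ![ξ, ξ] ≤ A * ‖ξ‖ ^ 2)
    (x v : E) :
    V x + fderiv ℝ V x v + α / 2 * ‖v‖ ^ 2 ≤ V (x + v) ∧
      V (x + v) ≤ V x + fderiv ℝ V x v + A / 2 * ‖v‖ ^ 2 := by
  obtain ⟨hφ, hψ⟩ := line_hasDerivAt V hV x v
  set φ' : ℝ → ℝ := fun t => fderiv ℝ V (x + t • v) v with hφ'def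
  -- monotonicity helpers
  have mono : ∀ γ : ℝ, (∀ t : ℝ, γ ≤ iteratedFDeriv ℝ 2 V (x + t • v) ![v, v]) →
      ∀ t : ℝ, 0 ≤ t → φ' 0 + γ * t ≤ φ' t := by
    intro γ hγ t ht
    have hq : ∀ s : ℝ, HasDerivAt (fun u : ℝ => φ' u - γ * u)
        (iteratedFDeriv ℝ 2 V (x + s • v) ![v, v] - γ) s := by
      intro s
      exact ((hψ s).sub ((hasDerivAt_id s).const_mul γ)).congr_deriv (by ring)
    have hmono : Monotone (fun u : ℝ => φ' u - γ * u) := by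
      apply monotone_of_deriv_nonneg
      · exact fun s => (hq s).differentiableAt
      · intro s
        rw [(hq s).deriv]
        linarith [hγ s]
    have := hmono ht
    simp only at this
    linarith [this]
  have mono' : ∀ γ : ℝ, (∀ t : ℝ, iteratedFDeriv ℝ 2 V (x + t • v) ![v, v] ≤ γ) →
      ∀ t : ℝ, 0 ≤ t → φ' t ≤ φ' 0 + γ * t := by
    intro γ hγ t ht
    have hq : ∀ s : ℝ, HasDerivAt (fun u : ℝ => γ * u - φ' u)
        (γ - iteratedFDeriv ℝ 2 V (x + s • v) ![v, v]) s := by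
      intro s
      exact (((hasDerivAt_id s).const_mul γ).sub (hψ s)).congr_deriv (by ring)
    have hmono : Monotone (fun u : ℝ => γ * u - φ' u) := by
      apply monotone_of_deriv_nonneg
      · exact fun s => (hq s).differentiableAt
      · intro s
        rw [(hq s).deriv]
        linarith [hγ s]
    have := hmono ht
    simp only at this
    linarith [this]
  have lower := mono (α * ‖v‖ ^ 2) (fun t => (hH _ v).1)
  have upper := mono' (A * ‖v‖ ^ 2) (fun t => (hH _ v).2)
  -- integrate once more
  have hg : ∀ s : ℝ, HasDerivAt
      (fun u : ℝ => V (x + u • v) - (φ' 0 * u + α / 2 * ‖v‖ ^ 2 * u ^ 2))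
      (φ' s - (φ' 0 + α * ‖v‖ ^ 2 * s)) s := by
    intro s
    have h2 : HasDerivAt (fun u : ℝ => φ' 0 * u + α / 2 * ‖v‖ ^ 2 * u ^ 2)
        (φ' 0 + α * ‖v‖ ^ 2 * s) s := by
      have ha := (hasDerivAt_id s).const_mul (φ' 0)
      have hb := (hasDerivAt_pow 2 s).const_mul (α / 2 * ‖v‖ ^ 2)
      exact (ha.add hb).congr_deriv (by push_cast; ring)
    exact (hφ s).sub h2
  have hgm : MonotoneOn (fun u : ℝ => V (x + u • v) - (φ' 0 * u + α / 2 * ‖v‖ ^ 2 * u ^ 2))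
      (Set.Ici (0:ℝ)) := by
    apply monotoneOn_of_deriv_nonneg (convex_Ici 0)
    · have hc1 : Continuous (fun u : ℝ => V (x + u • v)) :=
        hV.continuous.comp (continuous_const.add (continuous_id.smul continuous_const))
      exact (hc1.sub ((continuous_const.mul continuous_id).add
        (continuous_const.mul (continuous_pow 2)))).continuousOn
    · intro s _
      exact (hg s).differentiableAt.differentiableWithinAt
    · intro s hs
      rw [(hg s).deriv]
      have := lower s (le_of_lt (by simpa [interior_Ici] using hs))
      linarith
  have key1 := hgm (Set.self_mem_Ici) (by norm_num : (1:ℝ) ∈ Set.Ici (0:ℝ)) zero_le_one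
  have hg' : ∀ s : ℝ, HasDerivAt
      (fun u : ℝ => (φ' 0 * u + A / 2 * ‖v‖ ^ 2 * u ^ 2) - V (x + u • v))
      ((φ' 0 + A * ‖v‖ ^ 2 * s) - φ' s) s := by
    intro s
    have h2 : HasDerivAt (fun u : ℝ => φ' 0 * u + A / 2 * ‖v‖ ^ 2 * u ^ 2)
        (φ' 0 + A * ‖v‖ ^ 2 * s) s := by
      have ha := (hasDerivAt_id s).const_mul (φ' 0)
      have hb := (hasDerivAt_pow 2 s).const_mul (A / 2 * ‖v‖ ^ 2)
      exact (ha.add hb).congr_deriv (by push_cast; ring)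
    exact h2.sub (hφ s)
  have hgm' : MonotoneOn (fun u : ℝ => (φ' 0 * u + A / 2 * ‖v‖ ^ 2 * u ^ 2) - V (x + u • v))
      (Set.Ici (0:ℝ)) := by
    apply monotoneOn_of_deriv_nonneg (convex_Ici 0)
    · have hc1 : Continuous (fun u : ℝ => V (x + u • v)) :=
        hV.continuous.comp (continuous_const.add (continuous_id.smul continuous_const))
      exact (((continuous_const.mul continuous_id).add
        (continuous_const.mul (continuous_pow 2))).sub hc1).continuousOn
    · intro s _
      exact (hg' s).differentiableAt.differentiableWithinAt
    · intro s hs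
      rw [(hg' s).deriv]
      have := upper s (le_of_lt (by simpa [interior_Ici] using hs))
      linarith
  have key2 := hgm' (Set.self_mem_Ici) (by norm_num : (1:ℝ) ∈ Set.Ici (0:ℝ)) zero_le_one
  simp only [zero_smul, add_zero, one_smul, mul_zero, mul_one, zero_pow, one_pow,
    sub_zero, mul_zero] at key1 key2
  constructor
  · have : V x - 0 ≤ V (x + v) - (φ' 0 + α / 2 * ‖v‖ ^ 2) := by
      simpa using key1
    have hφ0 : φ' 0 = fderiv ℝ V x v := by simp [hφ'def]
    rw [hφ0] at this; linarith
  · have : 0 - V x ≤ (φ' 0 + A / 2 * ‖v‖ ^ 2) - V (x + v) := by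
      simpa using key2
    have hφ0 : φ' 0 = fderiv ℝ V x v := by simp [hφ'def]
    rw [hφ0] at this; linarith


lemma segment_convex_of_hess (V : E → ℝ) (hV : ContDiff ℝ 2 V) (α A : ℝ) (hα : 0 < α)
    (hH : ∀ x ξ : E, α * ‖ξ‖ ^ 2 ≤ iteratedFDeriv ℝ 2 V x ![ξ, ξ] ∧
      iteratedFDeriv ℝ 2 V x ![ξ, ξ] ≤ A * ‖ξ‖ ^ 2)
    (θ : ℝ) (hθ0 : 0 ≤ θ) (hθ1 : θ ≤ 1) (a b : E) :
    V (b + θ • (a - b)) ≤ θ * V a + (1 - θ) * V b := by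
  set z := b + θ • (a - b) with hz
  have h1 := (taylor_two_sided V hV α A hH z (a - z)).1
  have h2 := (taylor_two_sided V hV α A hH z (b - z)).1
  rw [show z + (a - z) = a by abel] at h1
  rw [show z + (b - z) = b by abel] at h2
  have hsum : θ • (a - z) + (1 - θ) • (b - z) = 0 := by
    rw [hz]; module
  have hlin : θ * (fderiv ℝ V z (a - z)) + (1 - θ) * (fderiv ℝ V z (b - z)) = 0 := by
    have := congrArg (fderiv ℝ V z) hsum
    simpa [map_add, _root_.map_smul] using this
  have hn1 : 0 ≤ α / 2 * ‖a - z‖ ^ 2 := by positivity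
  have hn2 : 0 ≤ α / 2 * ‖b - z‖ ^ 2 := by positivity
  nlinarith [mul_le_mul_of_nonneg_left (by linarith [h1] : fderiv ℝ V z (a - z) ≤ V a - V z) hθ0,
    mul_le_mul_of_nonneg_left (by linarith [h2] : fderiv ℝ V z (b - z) ≤ V b - V z)
      (by linarith : (0:ℝ) ≤ 1 - θ)]

lemma midpoint_strong (V : E → ℝ) (hV : ContDiff ℝ 2 V) (α A : ℝ)
    (hH : ∀ x ξ : E, α * ‖ξ‖ ^ 2 ≤ iteratedFDeriv ℝ 2 V x ![ξ, ξ] ∧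
      iteratedFDeriv ℝ 2 V x ![ξ, ξ] ≤ A * ‖ξ‖ ^ 2)
    (a b : E) :
    V ((1/2 : ℝ) • (a + b)) ≤ (V a + V b) / 2 - α / 8 * ‖a - b‖ ^ 2 := by
  set z := (1/2 : ℝ) • (a + b) with hz
  set v := (1/2 : ℝ) • (b - a) with hv
  have h1 := (taylor_two_sided V hV α A hH z v).1
  have h2 := (taylor_two_sided V hV α A hH z (-v)).1
  rw [show z + v = b by rw [hz, hv]; module] at h1
  rw [show z + -v = a by rw [hz, hv]; module] at h2
  have hlin : fderiv ℝ V z (-v) = - fderiv ℝ V z v := by simp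
  rw [hlin, norm_neg] at h2
  have hnv : ‖v‖ ^ 2 = ‖a - b‖ ^ 2 / 4 := by
    rw [hv, norm_smul, show b - a = -(a-b) by abel, norm_neg, mul_pow]
    norm_num
    ring
  rw [hnv] at h1 h2
  linarith

end Taylor

lemma arith_Vhalf {A g r0 Cmax Cm t vx : ℝ} (hA : 0 < A) (hg : 0 ≤ g) (ht : 0 ≤ t)
    (htr : t ≤ r0) (hr0 : 0 < r0) (h2A : 2*A*r0^2 ≤ Cmax) (h2g : 4*(g+1)*r0 ≤ Cmax)
    (hlt : Cmax < Cm) (hv : vx ≤ A/2*t^2 + g*t) : vx ≤ Cm/2 := by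
  nlinarith [mul_le_mul_of_nonneg_left (mul_self_le_mul_self ht htr) (le_of_lt hA),
    mul_le_mul_of_nonneg_left htr hg]

lemma arith_w1 {c cm vx : ℝ} (hch : 1/2 ≤ c) (hv : vx ≤ cm/2) (h4 : 4 < cm) :
    1 ≤ c*(cm - vx) := by
  nlinarith [mul_le_mul_of_nonneg_right hch (by linarith : (0:ℝ) ≤ cm - vx)]

lemma arith_R {av Cmax g t : ℝ} (ha : 0 < av) (hg : 0 ≤ g) (h4 : 4 ≤ Cmax)
    (ht : 1 < t) (h1 : av/2*t^2 - g*t < Cmax) : t ≤ 2/av*(Cmax+g) := by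
  rw [div_mul_eq_mul_div, le_div_iff₀ ha]
  nlinarith [mul_le_mul_of_nonneg_left ht.le (by linarith : (0:ℝ) ≤ Cmax),
    mul_le_mul_of_nonneg_left ht.le hg]

lemma arith_bern {x y : ℝ} {n : ℕ} (h : 1 + (n:ℝ)*(x-1) ≤ x^n) (hy : (n:ℝ)*(1-x) = y) :
    1 - x^n ≤ y := by linarith

lemma arith_mid {vx vy cm av dd rr : ℝ} (hx : vx < cm) (hy : vy < cm) (ha : 0 < av)
    (hr2 : rr^2 < dd) : (vx+vy)/2 - av/8*dd < cm - av/8*rr^2 := by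
  nlinarith

open Pointwise Metric ENNReal MeasureTheory in
theorem entropy_abstract {E : Type*} [NormedAddCommGroup E] [NormedSpace ℝ E]
    [MeasurableSpace E] [BorelSpace E] [FiniteDimensional ℝ E]
    (μ : Measure E) [μ.IsAddHaarMeasure]
    (hd : 1 ≤ Module.finrank ℝ E)
    (V : E → ℝ) (hV : ContDiff ℝ 2 V) (hV0 : V 0 = 0)
    (α A : ℝ) (hα : 0 < α) (hαA : α ≤ A)
    (hHess : ∀ (x ξ : E),
      α * ‖ξ‖ ^ 2 ≤ iteratedFDeriv ℝ 2 V x ![ξ, ξ] ∧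
      iteratedFDeriv ℝ 2 V x ![ξ, ξ] ≤ A * ‖ξ‖ ^ 2)
    (C : ℝ → ℝ) (hC : ∀ m > (1 : ℝ), 0 < C m)
    (hnorm : ∀ m > (1 : ℝ),
      ∫ x, (((m - 1) / m) * max (C m - V x) 0) ^ (1 / (m - 1)) ∂μ = 1) :
    ∃ K > (0 : ℝ), ∀ m ≥ (2 : ℝ),
      ∫ x, (((m - 1) / m) * max (C m - V x) 0) ^ (1 / (m - 1)) *
        |Real.log ((((m - 1) / m) * max (C m - V x) 0) ^ (1 / (m - 1)))| ∂μ
        ≤ K / (m - 1) := by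
  set d : ℕ := Module.finrank ℝ E with hfr
  haveI : Nontrivial E := Module.nontrivial_of_finrank_pos (by omega : 0 < Module.finrank ℝ E)
  have hA : 0 < A := lt_of_lt_of_le hα hαA
  have hVc : Continuous V := hV.continuous
  have htay := taylor_two_sided V hV α A hHess
  set g : ℝ := ‖fderiv ℝ V 0‖ with hgdef
  have hg : 0 ≤ g := norm_nonneg _
  have hbnd : ∀ x : E, |fderiv ℝ V 0 x| ≤ g * ‖x‖ := by
    intro x
    have := (fderiv ℝ V 0).le_opNorm x
    rwa [← Real.norm_eq_abs]
  have hlow : ∀ x : E, α/2 * ‖x‖^2 - g * ‖x‖ ≤ V x := by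
    intro x
    have h := (htay 0 x).1
    rw [zero_add, hV0] at h
    have := (abs_le.1 (hbnd x)).1
    linarith
  have hup : ∀ x : E, V x ≤ A/2 * ‖x‖^2 + g * ‖x‖ := by
    intro x
    have h := (htay 0 x).2
    rw [zero_add, hV0] at h
    have := (abs_le.1 (hbnd x)).2
    linarith
  have hVneg : ∀ x : E, -(g^2/(2*α)) ≤ V x := by
    intro x
    have h := hlow x
    have key : α/2*‖x‖^2 - g*‖x‖ + g^2/(2*α) = (α*‖x‖ - g)^2/(2*α) := by
      field_simp; ring
    nlinarith [div_nonneg (sq_nonneg (α*‖x‖ - g)) (by linarith : (0:ℝ) ≤ 2*α)]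
  set ι : ℝ≥0∞ := μ (ball (0:E) 1) with hιdef
  have hι0 : 0 < ι := measure_ball_pos _ _ one_pos
  have hιfin : ι ≠ ⊤ := measure_ball_lt_top.ne
  set ιr : ℝ := ι.toReal with hιrdef
  have hιr0 : 0 < ιr := ENNReal.toReal_pos hι0.ne' hιfin
  set r0 : ℝ := max 1 (2/ιr) with hr0def
  have hr01 : 1 ≤ r0 := le_max_left _ _
  have hr0pos : 0 < r0 := lt_of_lt_of_le one_pos hr01
  have hball2 : (2:ℝ) ≤ (μ (ball (0:E) r0)).toReal := by
    rw [Measure.addHaar_ball μ (0:E) hr0pos.le, ENNReal.toReal_mul,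
      ENNReal.toReal_ofReal (by positivity)]
    have h1 : r0 ≤ r0 ^ d := le_self_pow₀ hr01 (by omega)
    have h2 : 2/ιr ≤ r0 := le_max_right _ _
    calc (2:ℝ) = (2/ιr) * ιr := by field_simp
    _ ≤ r0 ^ d * ιr := by
        apply mul_le_mul_of_nonneg_right (le_trans h2 h1) hιr0.le
    _ = r0 ^ Module.finrank ℝ E * ι.toReal := by rw [hfr]
  set Cmax : ℝ := max 4 (max (2*A*r0^2) (4*(g+1)*r0)) with hCmaxdef
  have hCmax4 : (4:ℝ) ≤ Cmax := le_max_left _ _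
  set M : ℝ := max 1 (Cmax + g^2/(2*α)) with hMdef
  have hM1 : (1:ℝ) ≤ M := le_max_left _ _
  have hM0 : (0:ℝ) < M := lt_of_lt_of_le one_pos hM1
  set R : ℝ := max 1 ((2/α)*(Cmax+g)) with hRdef
  have hR1 : (1:ℝ) ≤ R := le_max_left _ _
  set S : ℝ := (μ (closedBall (0:E) R)).toReal with hSdef
  have hSfin : μ (closedBall (0:E) R) ≠ ⊤ := measure_closedBall_lt_top.ne
  have hS0 : 0 < S := by
    refine ENNReal.toReal_pos ?_ hSfin
    exact (lt_of_lt_of_le (measure_ball_pos _ _ (lt_of_lt_of_le one_pos hR1))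
      (measure_mono ball_subset_closedBall)).ne'
  set β : ℝ := 1/M with hβdef
  have hβ0 : 0 < β := by positivity
  set rd : ℝ := min 1 (β/(2*ιr)) with hrddef
  have hrd0 : 0 < rd := lt_min one_pos (by positivity)
  have hrd1 : rd ≤ 1 := min_le_left _ _
  set δ0 : ℝ := α/8 * rd^2 with hδ0def
  have hδ0pos : 0 < δ0 := by positivity
  set L : ℝ := (d+1)*S/δ0 with hLdef
  have hL0 : 0 < L := by positivity
  set K : ℝ := M^2*S + 18*L + 1 with hKdef
  refine ⟨K, by positivity, ?_⟩
  intro m hm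
  have hm1 : (1:ℝ) < m := by linarith only [hm]
  have hm0 : (0:ℝ) < m := by linarith only [hm]
  have hm1' : (0:ℝ) < m - 1 := by linarith only [hm]
  set p : ℝ := 1/(m-1) with hpdef
  have hp0 : 0 < p := by positivity
  have hp1 : p ≤ 1 := by
    rw [hpdef, div_le_one hm1']; linarith only [hm]
  set c : ℝ := (m-1)/m with hcdef
  have hc0 : 0 < c := by positivity
  have hc1 : c ≤ 1 := by rw [hcdef, div_le_one hm0]; linarith only []
  have hch : 1/2 ≤ c := by
    rw [hcdef, le_div_iff₀ hm0]; linarith only [hm]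
  set Cm : ℝ := C m with hCmdef
  have hCm : 0 < Cm := hC m hm1
  set w : E → ℝ := fun x => c * max (Cm - V x) 0 with hwdef
  have hwnn : ∀ x, 0 ≤ w x := fun x => by
    rw [hwdef]; positivity
  have hρnn : ∀ x, 0 ≤ (w x) ^ p := fun x => Real.rpow_nonneg (hwnn x) _
  have hIcm : Integrable (fun x => (w x) ^ p) μ := by
    by_contra h
    have h2 := hnorm m hm1
    rw [integral_undef h] at h2
    norm_num at h2
  have hnorm1 : ∫ x, (w x) ^ p ∂μ = 1 := hnorm m hm1
  have hCle : Cm ≤ Cmax := by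
    by_contra hlt'
    push_neg at hlt'
    have hball_le : ∀ x ∈ ball (0:E) r0, (1:ℝ) ≤ (w x)^p := by
      intro x hx
      have hxr : ‖x‖ ≤ r0 := (mem_ball_zero_iff.1 hx).le
      have h2A : 2*A*r0^2 ≤ Cmax := le_trans (le_max_left _ _) (le_max_right _ _)
      have h2g : 4*(g+1)*r0 ≤ Cmax := le_trans (le_max_right _ _) (le_max_right _ _)
      have hVx : V x ≤ Cm/2 :=
        arith_Vhalf hA hg (norm_nonneg x) hxr hr0pos h2A h2g hlt' (hup x)
      have hwx : 1 ≤ w x := by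
        rw [hwdef]
        simp only
        rw [max_eq_left (by linarith only [hVx, hCm] : (0:ℝ) ≤ Cm - V x)]
        exact arith_w1 hch hVx (by linarith only [hCmax4, hlt'])
      calc (1:ℝ) = 1^p := (Real.one_rpow p).symm
      _ ≤ (w x)^p := Real.rpow_le_rpow zero_le_one hwx hp0.le
    have hinteg := setIntegral_ge_of_const_le measurableSet_ball
      measure_ball_lt_top.ne hball_le hIcm.integrableOn
    have hle : ∫ x in ball (0:E) r0, (w x)^p ∂μ ≤ ∫ x, (w x)^p ∂μ :=
      setIntegral_le_integral hIcm (Filter.Eventually.of_forall hρnn)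
    rw [hnorm1] at hle
    have := le_trans hinteg hle
    rw [smul_eq_mul, mul_one, measureReal_def] at this
    linarith only [this, hball2]
  have hwub : ∀ x, w x ≤ M := by
    intro x
    have hmax : max (Cm - V x) 0 ≤ Cmax + g^2/(2*α) := by
      apply max_le
      · have := hVneg x; linarith only [this, hCle]
      · have h1 : (0:ℝ) ≤ g^2/(2*α) := by positivity
        linarith only [h1, hCmax4]
    have h0 : 0 ≤ max (Cm - V x) 0 := le_max_right _ _
    calc w x = c * max (Cm - V x) 0 := rfl
    _ ≤ 1 * max (Cm - V x) 0 := mul_le_mul_of_nonneg_right hc1 h0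
    _ = max (Cm - V x) 0 := one_mul _
    _ ≤ Cmax + g^2/(2*α) := hmax
    _ ≤ M := le_max_right _ _
  have hρub : ∀ x, (w x) ^ p ≤ M := by
    intro x
    rcases le_or_gt (w x) 1 with h|h
    · exact le_trans (Real.rpow_le_one (hwnn x) h hp0.le) hM1
    · calc (w x)^p ≤ (w x)^(1:ℝ) := Real.rpow_le_rpow_of_exponent_le h.le hp1
      _ = w x := Real.rpow_one _
      _ ≤ M := hwub x
  set U : Set E := {x | V x < Cm} with hUdef
  have hUopen : IsOpen U := isOpen_lt hVc continuous_const
  have hUmeas : MeasurableSet U := hUopen.measurableSet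
  have hUsub : U ⊆ closedBall (0:E) R := by
    intro x hx
    have hVx : V x < Cm := hx
    have h := hlow x
    rw [mem_closedBall_zero_iff]
    by_cases ht : ‖x‖ ≤ 1
    · linarith only [ht, hR1]
    · push_neg at ht
      have hR2 : (2/α)*(Cmax+g) ≤ R := le_max_right _ _
      have h1 : α/2 * ‖x‖^2 - g*‖x‖ < Cmax := by linarith only [hlow x, hVx, hCle]
      exact le_trans (arith_R hα hg hCmax4 ht h1) hR2
  have hUvol : μ U ≤ ENNReal.ofReal S := by
    rw [hSdef, ENNReal.ofReal_toReal hSfin]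
    exact measure_mono hUsub
  have hUfin : μ U ≠ ⊤ :=
    (lt_of_le_of_lt (measure_mono hUsub) measure_closedBall_lt_top).ne
  have hwU : ∀ x, x ∉ U → w x = 0 := by
    intro x hx
    simp only [hUdef, Set.mem_setOf_eq, not_lt] at hx
    rw [hwdef]
    simp only []
    rw [max_eq_right (by linarith only [hx] : Cm - V x ≤ 0), mul_zero]
  have hwpos_mem : ∀ x, 0 < w x → x ∈ U := by
    intro x hx
    by_contra h
    rw [hwU x h] at hx
    exact lt_irrefl _ hx
  have hβU : β ≤ (μ U).toReal := by
    have hmono : ∀ x, (w x)^p ≤ U.indicator (fun _ => M) x := by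
      intro x
      by_cases hx : x ∈ U
      · rw [Set.indicator_of_mem hx]; exact hρub x
      · rw [Set.indicator_of_notMem hx, hwU x hx, Real.zero_rpow hp0.ne']
    have hii : Integrable (U.indicator fun _ => M) μ :=
      (integrable_indicator_iff hUmeas).2 (integrableOn_const hUfin)
    have h1 : (1:ℝ) ≤ ∫ x, U.indicator (fun _ => M) x ∂μ := by
      rw [← hnorm1]; exact integral_mono hIcm hii hmono
    rw [integral_indicator_const M hUmeas, smul_eq_mul, measureReal_def] at h1
    rw [hβdef, div_le_iff₀ hM0]
    linarith only [h1]
  have hxb : ∃ xb, V xb < Cm - δ0 := by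
    have hUne : U.Nonempty := by
      rcases Set.eq_empty_or_nonempty U with h|h
      · exfalso
        rw [h] at hβU
        simp only [measure_empty, ENNReal.toReal_zero] at hβU
        linarith only [hβU, hβ0]
      · exact h
    have hfar : ∃ x ∈ U, ∃ y ∈ U, rd < dist x y := by
      by_contra hcon
      push_neg at hcon
      obtain ⟨x0, hx0⟩ := hUne
      have hsub2 : U ⊆ closedBall x0 rd := by
        intro y hy
        exact mem_closedBall.2 (hcon y hy x0 hx0)
      have hv : (μ U).toReal ≤ (μ (closedBall x0 rd)).toReal :=
        ENNReal.toReal_mono measure_closedBall_lt_top.ne (measure_mono hsub2)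
      have hcb : (μ (closedBall x0 rd)).toReal = rd^d * ιr := by
        rw [Measure.addHaar_closedBall μ x0 hrd0.le, ENNReal.toReal_mul,
          ENNReal.toReal_ofReal (by positivity), hfr]
      have hrp : rd^d * ιr ≤ rd * ιr :=
        mul_le_mul_of_nonneg_right (pow_le_of_le_one hrd0.le hrd1 (by omega)) hιr0.le
      have hrdle : rd ≤ β/(2*ιr) := min_le_right _ _
      have hhalf : rd * ιr ≤ β/2 := by
        calc rd * ιr ≤ (β/(2*ιr)) * ιr := mul_le_mul_of_nonneg_right hrdle hιr0.le
        _ = β/2 := by field_simp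
      rw [hcb] at hv
      linarith only [hv, hrp, hhalf, hβU, hβ0]
    obtain ⟨x, hx, y, hy, hxy⟩ := hfar
    refine ⟨(1/2:ℝ) • (x + y), ?_⟩
    have hmid := midpoint_strong V hV α A hHess x y
    have hd2 : rd^2 < ‖x - y‖^2 := by
      have hlt : rd < ‖x - y‖ := by rwa [← dist_eq_norm]
      rw [pow_two, pow_two]
      exact mul_self_lt_mul_self hrd0.le hlt
    have hVx : V x < Cm := hx
    have hVy : V y < Cm := hy
    calc V ((1/2:ℝ) • (x + y)) ≤ (V x + V y)/2 - α/8 * ‖x-y‖^2 := hmid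
    _ < Cm - δ0 := by rw [hδ0def]; exact arith_mid hVx hVy hα hd2
  obtain ⟨xb, hxbV⟩ := hxb
  have hshell : ∀ s : ℝ, 0 < s →
      μ {x : E | Cm - s < V x ∧ V x < Cm} ≤ ENNReal.ofReal (L*s) := by
    intro s hs
    rcases le_or_gt δ0 s with hsδ | hsδ
    · have h1 : {x : E | Cm - s < V x ∧ V x < Cm} ⊆ U := fun x hx => hx.2
      calc μ {x : E | Cm - s < V x ∧ V x < Cm} ≤ μ U := measure_mono h1
      _ ≤ ENNReal.ofReal S := hUvol
      _ ≤ ENNReal.ofReal (L*s) := by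
          apply ENNReal.ofReal_le_ofReal
          have e1 : L*δ0 ≤ L*s := mul_le_mul_of_nonneg_left hsδ hL0.le
          have e2 : L*δ0 = ((d:ℝ)+1)*S := by rw [hLdef]; field_simp
          have e3 : S ≤ ((d:ℝ)+1)*S := le_mul_of_one_le_left hS0.le (by
            have : (0:ℝ) ≤ (d:ℝ) := Nat.cast_nonneg d
            linarith only [Nat.cast_nonneg (α := ℝ) d])
          linarith only [e1, e2, e3]
    · set θ : ℝ := 1 - s/δ0 with hθdef
      have hsδ1 : s/δ0 < 1 := (div_lt_one hδ0pos).2 hsδ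
      have hθ0 : 0 < θ := by rw [hθdef]; linarith only [hsδ1]
      have hθ1 : θ ≤ 1 := by
        rw [hθdef]
        have : 0 ≤ s/δ0 := by positivity
        linarith only [this]
      have h1θ : 1 - θ = s/δ0 := by rw [hθdef]; ring
      have himg : ∀ x ∈ U, V (xb + θ • (x - xb)) ≤ Cm - s := by
        intro x hx
        have hseg := segment_convex_of_hess V hV α A hα hHess θ hθ0.le hθ1 x xb
        have hVx : V x < Cm := hx
        have hc1θ : (0:ℝ) < 1 - θ := by rw [h1θ]; positivity
        have e1 : θ * V x ≤ θ * Cm := mul_le_mul_of_nonneg_left hVx.le hθ0.le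
        have e2 : (1-θ) * V xb ≤ (1-θ)*(Cm - δ0) :=
          mul_le_mul_of_nonneg_left hxbV.le hc1θ.le
        have e3 : (1-θ)*δ0 = s := by rw [h1θ]; field_simp
        have e4 : θ*Cm + (1-θ)*(Cm-δ0) = Cm - (1-θ)*δ0 := by ring
        linarith only [hseg, e1, e2, e3, e4]
      set img : Set E := (fun x => xb + θ • (x - xb)) '' U with himgdef
      have hhU : img ⊆ U ∩ {x | V x ≤ Cm - s} := by
        rintro y ⟨x, hx, rfl⟩
        refine ⟨?_, himg x hx⟩
        have := himg x hx
        show V _ < Cm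
        linarith only [this, hs]
      have hshell_sub : {x : E | Cm - s < V x ∧ V x < Cm} ⊆ U \ img := by
        rintro x ⟨h1, h2⟩
        refine ⟨h2, fun hmem => ?_⟩
        have := (hhU hmem).2
        simp only [Set.mem_setOf_eq] at this
        linarith only [h1, this]
      have himg_eq : img = (AffineMap.homothety xb θ) '' U := by
        rw [himgdef]
        apply Set.image_congr
        intro x _
        rw [AffineMap.homothety_apply]
        simp only [vsub_eq_sub, vadd_eq_add]
        abel
      have hmeas_img : MeasurableSet img := by
        have heq2 : img = (fun y => xb + y) '' ((fun y : E => θ • y) '' ((fun x => x - xb) '' U)) := by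
          rw [himgdef, Set.image_image, Set.image_image]
        rw [heq2, Set.image_smul]
        have ho1 : IsOpen ((fun x : E => x - xb) '' U) :=
          (Homeomorph.subRight xb).isOpenMap U hUopen
        have ho2 : IsOpen (θ • ((fun x : E => x - xb) '' U)) := ho1.smul₀ hθ0.ne'
        exact ((Homeomorph.addLeft xb).isOpenMap _ ho2).measurableSet
      have hmeasure_img : μ img = ENNReal.ofReal (θ^d) * μ U := by
        rw [himg_eq, Measure.addHaar_image_homothety, ← hfr,
          abs_of_nonneg (pow_nonneg hθ0.le d)]
      have himgfin : μ img ≠ ⊤ := by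
        rw [hmeasure_img]
        exact ENNReal.mul_ne_top ENNReal.ofReal_ne_top hUfin
      have himgsubU : img ⊆ U := fun y hy => (hhU hy).1
      have hdiff : μ (U \ img) = μ U - μ img :=
        measure_diff himgsubU hmeas_img.nullMeasurableSet himgfin
      calc μ {x : E | Cm - s < V x ∧ V x < Cm} ≤ μ (U \ img) := measure_mono hshell_sub
      _ = μ U - ENNReal.ofReal (θ^d) * μ U := by rw [hdiff, hmeasure_img]
      _ ≤ ENNReal.ofReal (L*s) := by
          rw [tsub_le_iff_right]
          have hθd1 : θ^d ≤ 1 := pow_le_one₀ hθ0.le hθ1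
          have hθdnn : 0 ≤ θ^d := pow_nonneg hθ0.le d
          have hone : ENNReal.ofReal (θ^d) + ENNReal.ofReal (1-θ^d) = 1 := by
            rw [← ENNReal.ofReal_add hθdnn (by linarith only [hθd1])]
            norm_num
          have hdecomp : μ U = ENNReal.ofReal (θ^d) * μ U + ENNReal.ofReal (1-θ^d) * μ U := by
            rw [← add_mul, hone, one_mul]
          have hber : 1 + (d:ℝ)*(θ-1) ≤ θ^d := by
            have h := one_add_mul_le_pow (a := θ-1) (by linarith only [hθ0]) d
            rwa [show (1:ℝ)+(θ-1) = θ by ring] at h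
          have hreal : (1-θ^d)*S ≤ L*s := by
            have hthis : (d:ℝ)*(1-θ) = (d:ℝ)*(s/δ0) := by rw [h1θ]
            have hstep : (1-θ^d) ≤ (d:ℝ)*(s/δ0) := arith_bern hber hthis
            have e1 : (1-θ^d)*S ≤ ((d:ℝ)*(s/δ0))*S :=
              mul_le_mul_of_nonneg_right hstep hS0.le
            have e2 : ((d:ℝ)*(s/δ0))*S = ((d:ℝ)*S*s)/δ0 := by ring
            have e3 : L*s = (((d:ℝ)+1)*S*s)/δ0 := by rw [hLdef]; ring
            have hdd : (d:ℝ) ≤ (d:ℝ)+1 := le_add_of_nonneg_right zero_le_one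
            have e4 : ((d:ℝ)*S*s)/δ0 ≤ (((d:ℝ)+1)*S*s)/δ0 := by
              gcongr
            linarith only [e1, e2, e3, e4]
          have hkey : ENNReal.ofReal (1-θ^d) * μ U ≤ ENNReal.ofReal (L*s) := by
            calc ENNReal.ofReal (1-θ^d) * μ U ≤ ENNReal.ofReal (1-θ^d) * ENNReal.ofReal S :=
              mul_le_mul_right hUvol _
            _ = ENNReal.ofReal ((1-θ^d)*S) := (ENNReal.ofReal_mul (by linarith only [hθd1])).symm
            _ ≤ ENNReal.ofReal (L*s) := ENNReal.ofReal_le_ofReal hreal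
          calc μ U = ENNReal.ofReal (θ^d) * μ U + ENNReal.ofReal (1-θ^d) * μ U := hdecomp
          _ ≤ ENNReal.ofReal (θ^d) * μ U + ENNReal.ofReal (L*s) := add_le_add_right hkey _
          _ = ENNReal.ofReal (L*s) + ENNReal.ofReal (θ^d) * μ U := add_comm _ _
  -- final assembly
  have hwcont : Continuous w := by
    rw [hwdef]
    exact continuous_const.mul ((continuous_const.sub hVc).max continuous_const)
  have hρmeas : Measurable (fun x => w x ^ p) :=
    (hwcont.rpow_const (fun x => Or.inr hp0.le)).measurable
  have hFmeas : Measurable (fun x => w x ^ p * |Real.log (w x ^ p)|) :=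
    hρmeas.mul ((Real.measurable_log.comp hρmeas).abs)
  have hFnn : 0 ≤ᵐ[μ] fun x => w x ^ p * |Real.log (w x ^ p)| :=
    Filter.Eventually.of_forall (fun x => mul_nonneg (hρnn x) (abs_nonneg _))
  rw [integral_eq_lintegral_of_nonneg_ae hFnn hFmeas.aestronglyMeasurable]
  have hKnn : 0 ≤ K/(m-1) := by positivity
  apply ENNReal.toReal_le_of_le_ofReal hKnn
  set E1 : Set E := {x | 1 ≤ w x} with hE1def
  set E2 : Set E := {x | 0 < w x ∧ w x < 1} with hE2def
  have hE1meas : MeasurableSet E1 := measurableSet_le measurable_const hwcont.measurable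
  have hE2meas : MeasurableSet E2 :=
    (measurableSet_lt measurable_const hwcont.measurable).inter
      (measurableSet_lt hwcont.measurable measurable_const)
  have hsupp : ∀ x, x ∉ E1 ∪ E2 → ENNReal.ofReal (w x ^ p * |Real.log (w x ^ p)|) = 0 := by
    intro x hx
    have h1 : ¬ (1 ≤ w x) := fun h => hx (Or.inl h)
    have h2 : ¬ (0 < w x ∧ w x < 1) := fun h => hx (Or.inr h)
    push_neg at h1 h2
    have hw0 : w x = 0 := by
      rcases eq_or_lt_of_le (hwnn x) with h|h
      · exact h.symm
      · exact absurd (h2 h) (not_le.2 h1)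
    rw [hw0, Real.zero_rpow hp0.ne', zero_mul]
    simp
  have hsplit : ∫⁻ x, ENNReal.ofReal (w x ^ p * |Real.log (w x ^ p)|) ∂μ
      = ∫⁻ x in E1 ∪ E2, ENNReal.ofReal (w x ^ p * |Real.log (w x ^ p)|) ∂μ := by
    rw [← lintegral_indicator (hE1meas.union hE2meas)]
    apply lintegral_congr
    intro x
    by_cases hx : x ∈ E1 ∪ E2
    · rw [Set.indicator_of_mem hx]
    · rw [Set.indicator_of_notMem hx, hsupp x hx]
  rw [hsplit]
  have hE1sub : E1 ⊆ U := fun x hx => hwpos_mem x (lt_of_lt_of_le one_pos hx)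
  have hE1bound : ∫⁻ x in E1, ENNReal.ofReal (w x ^ p * |Real.log (w x ^ p)|) ∂μ
      ≤ ENNReal.ofReal (p * M^2 * S) := by
    have hpt : ∀ x ∈ E1, ENNReal.ofReal (w x ^ p * |Real.log (w x ^ p)|)
        ≤ ENNReal.ofReal (p * M^2) := by
      intro x hx
      apply ENNReal.ofReal_le_ofReal
      have h1w : (1:ℝ) ≤ w x := hx
      have hwpos : (0:ℝ) < w x := lt_of_lt_of_le one_pos h1w
      rw [Real.log_rpow hwpos, abs_mul, abs_of_nonneg hp0.le,
        abs_of_nonneg (Real.log_nonneg h1w)]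
      have e1 : w x ^ p ≤ M := hρub x
      have e2 : Real.log (w x) ≤ M :=
        le_trans (Real.log_le_sub_one_of_pos hwpos) (by linarith only [hwub x])
      have e3 : 0 ≤ Real.log (w x) := Real.log_nonneg h1w
      calc w x ^ p * (p * Real.log (w x)) = p * (w x ^ p * Real.log (w x)) := by ring
      _ ≤ p * (M * M) := by
          apply mul_le_mul_of_nonneg_left _ hp0.le
          exact mul_le_mul e1 e2 e3 (by linarith only [hM0] : (0:ℝ) ≤ M)
      _ = p * M^2 := by ring
    calc ∫⁻ x in E1, ENNReal.ofReal (w x ^ p * |Real.log (w x ^ p)|) ∂μ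
        ≤ ∫⁻ _x in E1, ENNReal.ofReal (p*M^2) ∂μ := setLIntegral_mono' hE1meas hpt
    _ = ENNReal.ofReal (p*M^2) * μ E1 := setLIntegral_const _ _
    _ ≤ ENNReal.ofReal (p*M^2) * ENNReal.ofReal S :=
        mul_le_mul_right (le_trans (measure_mono hE1sub) hUvol) _
    _ = ENNReal.ofReal (p*M^2*S) := by rw [← ENNReal.ofReal_mul (by positivity)]
  set Ak : ℕ → Set E := fun k => {x | ((1:ℝ)/4)^(k+1) < w x ∧ w x ≤ ((1:ℝ)/4)^k} with hAkdef
  have hE2subU : E2 ⊆ ⋃ k, Ak k := by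
    intro x hx
    obtain ⟨hw0, hw1⟩ := hx
    have hex : ∃ n : ℕ, ((1:ℝ)/4)^n < w x :=
      exists_pow_lt_of_lt_one hw0 (by norm_num)
    classical
    have hn0spec : ((1:ℝ)/4)^(Nat.find hex) < w x := Nat.find_spec hex
    have hn0pos : Nat.find hex ≠ 0 := by
      intro h
      rw [h] at hn0spec
      norm_num at hn0spec
      linarith only [hn0spec, hw1]
    obtain ⟨k, hk⟩ := Nat.exists_eq_succ_of_ne_zero hn0pos
    refine Set.mem_iUnion.2 ⟨k, ?_, ?_⟩
    · show ((1:ℝ)/4)^(k+1) < w x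
      rw [← Nat.succ_eq_add_one, ← hk]
      exact hn0spec
    · show w x ≤ ((1:ℝ)/4)^k
      have := Nat.find_min hex (by omega : k < Nat.find hex)
      exact not_lt.1 this
  have hAkvol : ∀ k, μ (Ak k) ≤ ENNReal.ofReal (L * (3*((1:ℝ)/4)^k)) := by
    intro k
    have hsub : Ak k ⊆ {x | Cm - 3*((1:ℝ)/4)^k < V x ∧ V x < Cm} := by
      rintro x ⟨hlo, hhi⟩
      have hwpos : 0 < w x := lt_trans (by positivity) hlo
      have hxU : x ∈ U := hwpos_mem x hwpos
      have hVlt : V x < Cm := hxU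
      constructor
      · have hmaxpos : (0:ℝ) < Cm - V x := by linarith only [hVlt]
        have hwx : w x = c * (Cm - V x) := by
          rw [hwdef]
          simp only
          rw [max_eq_left hmaxpos.le]
        have h3 := mul_le_mul_of_nonneg_right hch hmaxpos.le
        have h2 : Cm - V x ≤ 2 * w x := by rw [hwx]; linarith only [h3]
        have h5 : (0:ℝ) < ((1:ℝ)/4)^k := by positivity
        show Cm - 3*((1:ℝ)/4)^k < V x
        linarith only [h2, hhi, h5]
      · exact hVlt
    exact le_trans (measure_mono hsub) (hshell _ (by positivity))
  have hAkmeas : ∀ k, MeasurableSet (Ak k) := fun k =>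
    (measurableSet_lt measurable_const hwcont.measurable).inter
      (measurableSet_le hwcont.measurable measurable_const)
  have hAkpt : ∀ k, ∀ x ∈ Ak k, ENNReal.ofReal (w x ^ p * |Real.log (w x ^ p)|)
      ≤ ENNReal.ofReal (3*p*2^k) := by
    intro k x hx
    obtain ⟨hlo, hhi⟩ := hx
    have hwpos : 0 < w x := lt_trans (by positivity) hlo
    have hwle1 : w x ≤ 1 := le_trans hhi (pow_le_one₀ (by norm_num) (by norm_num))
    apply ENNReal.ofReal_le_ofReal
    rw [Real.log_rpow hwpos, abs_mul, abs_of_nonneg hp0.le,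
      abs_of_nonpos (Real.log_nonpos (hwnn x) hwle1)]
    have e1 : w x ^ p ≤ 1 := Real.rpow_le_one (hwnn x) hwle1 hp0.le
    have e2 : -Real.log (w x) ≤ 3*2^k := by
      have hlog := Real.log_lt_log (by positivity) hlo
      rw [Real.log_pow, one_div, Real.log_inv] at hlog
      have h4 : Real.log 4 ≤ 3 := by
        linarith only [Real.log_le_sub_one_of_pos (by norm_num : (0:ℝ) < 4)]
      have h4nn : (0:ℝ) ≤ Real.log 4 := Real.log_nonneg (by norm_num)
      have hk2 : ((k:ℝ)+1) ≤ 2^k := by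
        exact_mod_cast Nat.succ_le_of_lt ((Nat.lt_two_pow_self (n := k)))
      have hstep1 : -Real.log (w x) < ((k:ℝ)+1) * Real.log 4 := by
        push_cast at hlog
        linarith only [hlog]
      have hstep2 : ((k:ℝ)+1) * Real.log 4 ≤ ((k:ℝ)+1) * 3 :=
        mul_le_mul_of_nonneg_left h4 (by positivity)
      have hstep3 : ((k:ℝ)+1) * 3 ≤ 2^k * 3 :=
        mul_le_mul_of_nonneg_right hk2 (by norm_num)
      linarith only [hstep1, hstep2, hstep3]
    have e2nn : (0:ℝ) ≤ -Real.log (w x) :=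
      neg_nonneg.2 (Real.log_nonpos (hwnn x) hwle1)
    have h6 : p * -Real.log (w x) ≤ p * (3*2^k) := mul_le_mul_of_nonneg_left e2 hp0.le
    have h7 : w x ^ p * (p * -Real.log (w x)) ≤ 1 * (p * (3*2^k)) :=
      mul_le_mul e1 h6 (mul_nonneg hp0.le e2nn) zero_le_one
    linarith only [h7]
  have hgeom : ∑' (k:ℕ), (ENNReal.ofReal ((1:ℝ)/2))^k = 2 := by
    rw [ENNReal.tsum_geometric]
    have : ENNReal.ofReal ((1:ℝ)/2) = 2⁻¹ := by
      rw [ENNReal.ofReal_div_of_pos (by norm_num), ENNReal.ofReal_one, one_div]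
      norm_num
    rw [this, ENNReal.one_sub_inv_two, inv_inv]
  have hE2bound : ∫⁻ x in E2, ENNReal.ofReal (w x ^ p * |Real.log (w x ^ p)|) ∂μ
      ≤ ENNReal.ofReal (18*p*L) := by
    calc ∫⁻ x in E2, ENNReal.ofReal (w x ^ p * |Real.log (w x ^ p)|) ∂μ
        ≤ ∫⁻ x in ⋃ k, Ak k, ENNReal.ofReal (w x ^ p * |Real.log (w x ^ p)|) ∂μ :=
          lintegral_mono_set hE2subU
    _ ≤ ∑' k, ∫⁻ x in Ak k, ENNReal.ofReal (w x ^ p * |Real.log (w x ^ p)|) ∂μ :=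
          lintegral_iUnion_le _ _
    _ ≤ ∑' k, ENNReal.ofReal (9*p*L) * (ENNReal.ofReal ((1:ℝ)/2))^k := by
        apply ENNReal.tsum_le_tsum
        intro k
        calc ∫⁻ x in Ak k, ENNReal.ofReal (w x ^ p * |Real.log (w x ^ p)|) ∂μ
            ≤ ∫⁻ _x in Ak k, ENNReal.ofReal (3*p*2^k) ∂μ :=
              setLIntegral_mono' (hAkmeas k) (hAkpt k)
        _ = ENNReal.ofReal (3*p*2^k) * μ (Ak k) := setLIntegral_const _ _
        _ ≤ ENNReal.ofReal (3*p*2^k) * ENNReal.ofReal (L * (3*((1:ℝ)/4)^k)) :=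
              mul_le_mul_right (hAkvol k) _
        _ = ENNReal.ofReal (9*p*L) * (ENNReal.ofReal ((1:ℝ)/2))^k := by
              rw [← ENNReal.ofReal_pow (by norm_num), ← ENNReal.ofReal_mul (by positivity),
                ← ENNReal.ofReal_mul (by positivity)]
              congr 1
              have hhalf : (2:ℝ)^k*((1:ℝ)/4)^k = ((1:ℝ)/2)^k := by
                rw [← mul_pow]
                norm_num
              linear_combination (9*p*L) * hhalf
    _ = ENNReal.ofReal (9*p*L) * ∑' (k:ℕ), (ENNReal.ofReal ((1:ℝ)/2))^k :=
          ENNReal.tsum_mul_left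
    _ = ENNReal.ofReal (9*p*L) * 2 := by rw [hgeom]
    _ = ENNReal.ofReal (18*p*L) := by
          rw [mul_two, ← ENNReal.ofReal_add (by positivity) (by positivity)]
          ring_nf
  calc ∫⁻ x in E1 ∪ E2, ENNReal.ofReal (w x ^ p * |Real.log (w x ^ p)|) ∂μ
      ≤ ∫⁻ x in E1, ENNReal.ofReal (w x ^ p * |Real.log (w x ^ p)|) ∂μ
        + ∫⁻ x in E2, ENNReal.ofReal (w x ^ p * |Real.log (w x ^ p)|) ∂μ :=
        lintegral_union_le _ _ _
  _ ≤ ENNReal.ofReal (p*M^2*S) + ENNReal.ofReal (18*p*L) := add_le_add hE1bound hE2bound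
  _ = ENNReal.ofReal (p*M^2*S + 18*p*L) :=
        (ENNReal.ofReal_add (by positivity) (by positivity)).symm
  _ ≤ ENNReal.ofReal (K/(m-1)) := by
        apply ENNReal.ofReal_le_ofReal
        have hKp : K/(m-1) = p*K := by rw [hpdef]; ring
        have hexpand : p*K = p*M^2*S + 18*p*L + p := by rw [hKdef]; ring
        linarith only [hKp, hexpand, hp0]

/-- Entropy bound on the stationary states: `∫ ρ̄_m |log ρ̄_m| ≤ K/(m−1)` for `m ≥ 2`. -/
theorem stationary_states_entropy_bound {d : ℕ} (hd : 1 ≤ d)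
    (V : EuclideanSpace ℝ (Fin d) → ℝ) (hV : ContDiff ℝ 2 V) (hV0 : V 0 = 0)
    (α A : ℝ) (hα : 0 < α) (hαA : α ≤ A)
    (hHess : ∀ (x ξ : EuclideanSpace ℝ (Fin d)),
      α * ‖ξ‖ ^ 2 ≤ iteratedFDeriv ℝ 2 V x ![ξ, ξ] ∧
      iteratedFDeriv ℝ 2 V x ![ξ, ξ] ≤ A * ‖ξ‖ ^ 2)
    (C : ℝ → ℝ) (hC : ∀ m > (1 : ℝ), 0 < C m)
    (hnorm : ∀ m > (1 : ℝ), ∫ x, rhoBar V C m x = 1) :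
    ∃ K > (0 : ℝ), ∀ m ≥ (2 : ℝ),
      ∫ x, rhoBar V C m x * |Real.log (rhoBar V C m x)| ≤ K / (m - 1) := by
  have hd' : 1 ≤ Module.finrank ℝ (EuclideanSpace ℝ (Fin d)) := by
    rw [finrank_euclideanSpace_fin]; omega
  simpa [rhoBar] using entropy_abstract (volume : Measure (EuclideanSpace ℝ (Fin d))) hd'
    V hV hV0 α A hα hαA hHess C hC (by simpa [rhoBar] using hnorm)
end

section
/- Let d ≥ 3. There exists a constant C > 0 depending only on d such that for every real m > 1 and every measurable u : ℝ^d → [0,∞) with ∫_{ℝ^d} u dx = 1 for which the function w := u^{(2m−1)/2} is continuously differentiable with compact support, one has ∫_{ℝ^d} u(x)^{2m−1} dx ≤ C (1 + ∫_{ℝ^d} ‖∇w(x)‖² dx). -/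
open MeasureTheory
open scoped ENNReal NNReal

/-- Uniform-in-`m` bound on the `L^{2m−1}` norm of a unit-mass density in terms of the
Dirichlet energy of `u^{m−1/2}` (interpolation + Sobolev inequality), for `d ≥ 3`. -/
theorem lintegral_rpow_le_one_add_dirichlet (d : ℕ) (hd : 3 ≤ d) :
    ∃ C : ℝ, 0 < C ∧
      ∀ m : ℝ, 1 < m →
        ∀ u : EuclideanSpace ℝ (Fin d) → ℝ, Measurable u → (∀ x, 0 ≤ u x) →
          (∫ x, u x) = 1 →
          ContDiff ℝ 1 (fun x => u x ^ ((2 * m - 1) / 2)) →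
          HasCompactSupport (fun x => u x ^ ((2 * m - 1) / 2)) →
          ∫ x, u x ^ (2 * m - 1) ≤
            C * (1 + ∫ x, ‖gradient (fun y => u y ^ ((2 * m - 1) / 2)) x‖ ^ 2) := by
  classical
  set μ : Measure (EuclideanSpace ℝ (Fin d)) := volume with hμdef
  set Cs : ℝ≥0 := eLpNormLESNormFDerivOfEqInnerConst μ 2 with hCsdef
  refine ⟨1 + (Cs : ℝ) ^ 2, by positivity, ?_⟩
  intro m hm u hu hupos hint hw1 hw2
  set w : EuclideanSpace ℝ (Fin d) → ℝ := fun x => u x ^ ((2 * m - 1) / 2) with hwdef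
  set q : ℝ := (2 * m - 1) / 2 with hqdef
  have hd3 : (3 : ℝ) ≤ (d : ℝ) := by exact_mod_cast hd
  have hd2 : (2 : ℝ) < (d : ℝ) := by linarith
  have hd2' : (0 : ℝ) < (d : ℝ) - 2 := by linarith
  have hd0 : (0 : ℝ) < (d : ℝ) := by linarith
  set s : ℝ := 2 * d / ((d : ℝ) - 2) with hsdef
  have hs2 : 2 < s := by
    rw [hsdef, lt_div_iff₀ hd2']
    linarith
  have hs0 : 0 < s := by linarith
  have hq1 : (1 : ℝ) / 2 < q := by rw [hqdef]; linarith
  have hq0 : 0 < q := by linarith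
  set r : ℝ := 2 * m - 1 with hrdef
  have hr1 : 1 < r := by rw [hrdef]; linarith
  have hrq : r = 2 * q := by rw [hrdef, hqdef]; ring
  set P : ℝ := s * q with hPdef
  have hrP : r < P := by
    rw [hrq, hPdef]
    exact mul_lt_mul_of_pos_right hs2 hq0
  have hP1 : 1 < P := hr1.trans hrP
  have hP1' : (0 : ℝ) < P - 1 := by linarith
  set lam : ℝ := (P - r) / (P - 1) with hlamdef
  have hlam0 : 0 < lam := div_pos (by linarith) hP1'
  have hlam1 : lam < 1 := by
    rw [hlamdef, div_lt_one hP1']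
    linarith
  have hlam1' : 0 < 1 - lam := by linarith
  -- basic ENNReal quantities
  set U : EuclideanSpace ℝ (Fin d) → ℝ≥0∞ := fun x => ENNReal.ofReal (u x) with hUdef
  have hUmeas : Measurable U := hu.ennreal_ofReal
  have huint : Integrable u μ := by
    by_contra h
    rw [integral_undef h] at hint
    exact one_ne_zero hint.symm
  have hU1 : ∫⁻ x, U x ∂μ = 1 := by
    rw [← ofReal_integral_eq_lintegral_ofReal huint (Filter.Eventually.of_forall hupos), hint]
    simp
  set A : ℝ≥0∞ := ∫⁻ x, U x ^ r ∂μ with hAdef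
  set B : ℝ≥0∞ := ∫⁻ x, U x ^ P ∂μ with hBdef
  set D : ℝ≥0∞ := ∫⁻ x, (‖fderiv ℝ w x‖₊ : ℝ≥0∞) ^ (2 : ℝ) ∂μ with hDdef
  -- Step 1 : interpolation (Hölder)
  have step1 : A ≤ B ^ ((r - 1) / (P - 1)) := by
    have hconj : Real.HolderConjugate (1 / lam) (1 / (1 - lam)) := by
      constructor
      · simp only [one_div, inv_inv, inv_one]; ring
      · exact one_div_pos.mpr hlam0
      · exact one_div_pos.mpr hlam1'
    have hf : AEMeasurable (fun x => U x ^ lam) μ := (hUmeas.pow_const lam).aemeasurable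
    have hg : AEMeasurable (fun x => U x ^ (r - lam)) μ :=
      (hUmeas.pow_const (r - lam)).aemeasurable
    have key := ENNReal.lintegral_mul_le_Lp_mul_Lq μ hconj hf hg
    have e1 : ∀ x, U x ^ lam * U x ^ (r - lam) = U x ^ r := by
      intro x
      rw [← ENNReal.rpow_add_of_nonneg lam (r - lam) hlam0.le (by linarith), add_sub_cancel]
    have e2 : ∀ x, (U x ^ lam) ^ (1 / lam) = U x := by
      intro x
      rw [← ENNReal.rpow_mul, mul_one_div, div_self hlam0.ne', ENNReal.rpow_one]
    have key2 : r - lam = P * (1 - lam) := by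
      rw [hlamdef]
      field_simp
      ring
    have e3 : ∀ x, (U x ^ (r - lam)) ^ (1 / (1 - lam)) = U x ^ P := by
      intro x
      rw [← ENNReal.rpow_mul]
      congr 1
      rw [key2, mul_one_div, mul_div_assoc, div_self hlam1'.ne', mul_one]
    simp only [one_div_one_div, Pi.mul_apply] at key
    simp_rw [e1, e2, e3] at key
    rw [hU1, ENNReal.one_rpow, one_mul] at key
    have hexp : 1 - lam = (r - 1) / (P - 1) := by
      rw [hlamdef]; field_simp; ring
    rwa [hexp] at key
  -- Step 2 : Sobolev inequality
  have hEfin : 0 < Module.finrank ℝ (EuclideanSpace ℝ (Fin d)) := by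
    rw [finrank_euclideanSpace_fin]
    omega
  set p' : ℝ≥0 := s.toNNReal with hp'def
  have hp'coe : (p' : ℝ) = s := Real.coe_toNNReal s hs0.le
  have hp'0 : p' ≠ 0 := by
    intro h
    rw [← hp'coe] at hs0
    rw [h] at hs0
    simp at hs0
  have hsob := eLpNorm_le_eLpNorm_fderiv_of_eq_inner (μ := μ) (u := w) hw1 hw2
    (p := 2) (p' := p') (by norm_num) hEfin ?side
  case side =>
    rw [hp'coe, finrank_euclideanSpace_fin, hsdef]
    push_cast
    field_simp
  -- rewrite both sides of hsob as lintegrals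
  have hwnorm : ∀ x, (‖w x‖₊ : ℝ≥0∞) = U x ^ q := by
    intro x
    rw [← enorm_eq_nnnorm, ← ofReal_norm, Real.norm_of_nonneg (Real.rpow_nonneg (hupos x) _)]
    exact (ENNReal.ofReal_rpow_of_nonneg (hupos x) hq0.le).symm
  have hBnorm : B = ∫⁻ x, (‖w x‖₊ : ℝ≥0∞) ^ s ∂μ := by
    rw [hBdef]
    congr 1 with x
    rw [hwnorm x, ← ENNReal.rpow_mul, hPdef, mul_comm]
  have hlhs : eLpNorm w p' μ = B ^ (1 / s) := by
    rw [eLpNorm_nnreal_eq_lintegral hp'0, hp'coe, hBnorm]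
    simp only [enorm_eq_nnnorm]
  have hrhs : eLpNorm (fderiv ℝ w) 2 μ = D ^ (1 / (2 : ℝ)) := by
    rw [eLpNorm_eq_lintegral_rpow_enorm_toReal (by norm_num) (by norm_num), hDdef]
    norm_num [enorm_eq_nnnorm]
  have hsob' : B ^ (1 / s) ≤ (Cs : ℝ≥0∞) * D ^ (1 / (2 : ℝ)) := by
    rw [← hlhs, ← hrhs]
    exact hsob
  have hB : B ≤ ((Cs : ℝ≥0∞) * D ^ (1 / (2 : ℝ))) ^ s := by
    have := ENNReal.rpow_le_rpow hsob' hs0.le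
    rwa [← ENNReal.rpow_mul, one_div, inv_mul_cancel₀ hs0.ne', ENNReal.rpow_one] at this
  -- Step 3 : combine
  set t : ℝ := s * ((r - 1) / (P - 1)) with htdef
  have ht0 : 0 < t := mul_pos hs0 (div_pos (by linarith) hP1')
  have ht2 : t ≤ 2 := by
    rw [htdef, ← mul_div_assoc, div_le_iff₀ hP1']
    have : s * (r - 1) = s * r - s := by ring
    have h2P : 2 * (P - 1) = s * r - 2 := by rw [hPdef]; rw [hrq]; ring
    calc s * (r - 1) = s * r - s := by ring
      _ ≤ s * r - 2 := by linarith
      _ = 2 * (P - 1) := h2P.symm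
  set a : ℝ≥0∞ := (Cs : ℝ≥0∞) * D ^ (1 / (2 : ℝ)) with hadef
  have hAa : A ≤ a ^ t := by
    calc A ≤ B ^ ((r - 1) / (P - 1)) := step1
      _ ≤ (a ^ s) ^ ((r - 1) / (P - 1)) :=
          ENNReal.rpow_le_rpow hB (div_nonneg (by linarith) hP1'.le)
      _ = a ^ t := by rw [← ENNReal.rpow_mul, htdef]
  have hat : a ^ t ≤ 1 + a ^ (2 : ℝ) := by
    rcases le_total a 1 with h | h
    · exact le_trans (ENNReal.rpow_le_one h ht0.le) le_self_add
    · exact le_trans (ENNReal.rpow_le_rpow_of_exponent_le h ht2) le_add_self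
  have ha2 : a ^ (2 : ℝ) = (Cs : ℝ≥0∞) ^ (2 : ℝ) * D := by
    rw [hadef, ENNReal.mul_rpow_of_nonneg _ _ (by norm_num : (0:ℝ) ≤ 2), ← ENNReal.rpow_mul]
    norm_num
  have hmain : A ≤ (1 + (Cs : ℝ≥0∞) ^ (2 : ℝ)) * (1 + D) := by
    calc A ≤ 1 + (Cs : ℝ≥0∞) ^ (2 : ℝ) * D := by rw [← ha2]; exact hAa.trans hat
      _ ≤ (1 + (Cs : ℝ≥0∞) ^ (2 : ℝ)) * (1 + D) := by
          have expand : (1 + (Cs : ℝ≥0∞) ^ (2 : ℝ)) * (1 + D)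
              = (1 + (Cs : ℝ≥0∞) ^ (2 : ℝ) * D) + (D + (Cs : ℝ≥0∞) ^ (2 : ℝ)) := by ring
          rw [expand]
          exact le_self_add

  -- finiteness of D and real conversions
  have hfc : Continuous (fderiv ℝ w) := hw1.continuous_fderiv one_ne_zero
  have hfs : HasCompactSupport (fderiv ℝ w) := hw2.fderiv (𝕜 := ℝ)
  have hgcs : HasCompactSupport (fun x => ‖fderiv ℝ w x‖ ^ 2) :=
    hfs.comp_left (g := fun v => ‖v‖ ^ 2) (by simp)
  have hgint : Integrable (fun x => ‖fderiv ℝ w x‖ ^ 2) μ :=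
    ((hfc.norm.pow 2)).integrable_of_hasCompactSupport hgcs
  have hDeq : D = ENNReal.ofReal (∫ x, ‖fderiv ℝ w x‖ ^ 2 ∂μ) := by
    rw [ofReal_integral_eq_lintegral_ofReal hgint
      (Filter.Eventually.of_forall fun x => by positivity), hDdef]
    congr 1 with x
    rw [← Real.rpow_natCast (‖fderiv ℝ w x‖) 2]
    rw [← ENNReal.ofReal_rpow_of_nonneg (norm_nonneg _) (by positivity)]
    rw [ofReal_norm, enorm_eq_nnnorm]
    norm_num
  have hDne : D ≠ ∞ := by rw [hDeq]; exact ENNReal.ofReal_ne_top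
  have hDtoReal : D.toReal = ∫ x, ‖fderiv ℝ w x‖ ^ 2 ∂μ := by
    rw [hDeq, ENNReal.toReal_ofReal (integral_nonneg fun x => by positivity)]
  have hgrad : ∀ x, ‖gradient w x‖ = ‖fderiv ℝ w x‖ := fun x =>
    LinearIsometryEquiv.norm_map _ _
  have hgradint : (∫ x, ‖gradient w x‖ ^ 2 ∂μ) = D.toReal := by
    rw [hDtoReal]
    simp_rw [hgrad]
  -- the left-hand side
  have hwsq : ∀ x, u x ^ r = w x ^ 2 := by
    intro x
    rw [hwdef]
    rw [← Real.rpow_natCast (u x ^ q) 2, ← Real.rpow_mul (hupos x)]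
    congr 1
    rw [hrq]
    push_cast
    ring
  have hw2' : HasCompactSupport (fun x => w x ^ 2) :=
    hw2.comp_left (g := fun t : ℝ => t ^ 2) (by simp)
  have hwint : Integrable (fun x => u x ^ r) μ := by
    simp_rw [hwsq]
    exact ((hw1.continuous.pow 2)).integrable_of_hasCompactSupport hw2'
  have hAeq : A = ENNReal.ofReal (∫ x, u x ^ r ∂μ) := by
    rw [ofReal_integral_eq_lintegral_ofReal hwint
      (Filter.Eventually.of_forall fun x => Real.rpow_nonneg (hupos x) r), hAdef]
    congr 1 with x
    exact ENNReal.ofReal_rpow_of_nonneg (hupos x) (by linarith)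
  have hAtoReal : A.toReal = ∫ x, u x ^ r ∂μ := by
    rw [hAeq, ENNReal.toReal_ofReal (integral_nonneg fun x => Real.rpow_nonneg (hupos x) r)]
  -- final bound
  have hcne : ((Cs : ℝ≥0∞) ^ (2 : ℝ)) ≠ ∞ :=
    ENNReal.rpow_ne_top_of_nonneg (by norm_num) ENNReal.coe_ne_top
  have hRne : (1 + (Cs : ℝ≥0∞) ^ (2 : ℝ)) * (1 + D) ≠ ∞ :=
    ENNReal.mul_ne_top (ENNReal.add_ne_top.mpr ⟨ENNReal.one_ne_top, hcne⟩)
      (ENNReal.add_ne_top.mpr ⟨ENNReal.one_ne_top, hDne⟩)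
  have hfin := ENNReal.toReal_mono hRne hmain
  rw [hAtoReal, ENNReal.toReal_mul, ENNReal.toReal_add ENNReal.one_ne_top hcne,
    ENNReal.toReal_add ENNReal.one_ne_top hDne, ENNReal.toReal_one] at hfin
  have hCsR : ((Cs : ℝ≥0∞) ^ (2 : ℝ)).toReal = (Cs : ℝ) ^ 2 := by
    rw [← ENNReal.toReal_rpow, ENNReal.coe_toReal, ← Real.rpow_natCast (Cs : ℝ) 2]
    norm_num
  rw [hCsR, ← hgradint] at hfin
  exact hfin
end
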